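/- arXiv:2512.16817 — 6 statements merged into one kernel-verified Lean document; each statement's English description precedes it below -/
import Mathlib

section
/- Let A, B_1, ..., B_k be trace-free symmetric endomorphisms of a 6-dimensional Hermitian vector space (V, J), each commuting with J, and let λ be a real number. If A^2 = λ^2·Id + B_1^2 + ... + B_k^2, then λ = 0 and the positive semidefinite endomorphisms A^2, B_1^2, ..., B_k^2 are pairwise positively collinear (each is a nonnegative multiple of any nonzero one among them). -/
open scoped RealInnerProductSpace

section Aux

variable {V : Type*} [NormedAddCommGroup V] [InnerProductSpace ℝ V] [FiniteDimensional ℝ V]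

set_option linter.unusedSectionVars false

/-- Trace of an operator diagonal in a basis. -/
lemma trace_eq_sum_diag' {ι : Type*} [Fintype ι] [DecidableEq ι] (b : Module.Basis ι ℝ V)
    (f : Module.End ℝ V) (c : ι → ℝ) (h : ∀ i, f (b i) = c i • b i) :
    LinearMap.trace ℝ V f = ∑ i, c i := by
  rw [LinearMap.trace_eq_matrix_trace ℝ b f, Matrix.trace]
  refine Finset.sum_congr rfl fun i _ => ?_
  simp [Matrix.diag, LinearMap.toMatrix_apply, h i, Module.Basis.repr_self]

/-- Trace via an orthonormal basis. -/
lemma trace_eq_sum_inner' {ι : Type*} [Fintype ι] [DecidableEq ι]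
    (b : OrthonormalBasis ι ℝ V) (f : Module.End ℝ V) :
    LinearMap.trace ℝ V f = ∑ i, ⟪b i, f (b i)⟫ := by
  rw [LinearMap.trace_eq_matrix_trace ℝ b.toBasis f, Matrix.trace]
  refine Finset.sum_congr rfl fun i _ => ?_
  simp [Matrix.diag, LinearMap.toMatrix_apply, OrthonormalBasis.coe_toBasis_repr_apply,
    OrthonormalBasis.repr_apply_apply, OrthonormalBasis.coe_toBasis]

/-- A finite-dimensional real vector space with a complex structure has even dimension. -/
lemma even_finrank_of_sq_neg_one {W : Type*} [AddCommGroup W] [Module ℝ W]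
    [FiniteDimensional ℝ W] (j : Module.End ℝ W) (hj : j * j = -1) :
    Even (Module.finrank ℝ W) := by
  have h1 : (-1 : Module.End ℝ W) = (-1 : ℝ) • (1 : Module.End ℝ W) := by
    ext w; simp
  have hdet : LinearMap.det j * LinearMap.det j = (-1 : ℝ) ^ Module.finrank ℝ W := by
    calc LinearMap.det j * LinearMap.det j = LinearMap.det (j * j) := (map_mul _ j j).symm
      _ = LinearMap.det ((-1 : ℝ) • (1 : Module.End ℝ W)) := by rw [hj, h1]
      _ = (-1 : ℝ) ^ Module.finrank ℝ W * LinearMap.det (1 : Module.End ℝ W) :=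
          LinearMap.det_smul _ _
      _ = (-1 : ℝ) ^ Module.finrank ℝ W := by
          rw [Module.End.one_eq_id, LinearMap.det_id, mul_one]
  rcases Nat.even_or_odd (Module.finrank ℝ W) with h | h
  · exact h
  · exfalso
    rw [h.neg_one_pow] at hdet
    nlinarith [sq_nonneg (LinearMap.det j)]

/-- The combinatorial identity: if the values of `μ : Fin 6 → ℝ` occur with even
multiplicities and sum to zero, then `∑ μ⁴ = (∑ μ²)²/4`. -/
lemma sum_pow_four_of_paired (μ : Fin 6 → ℝ) (h1 : ∑ i, μ i = 0)
    (hev : ∀ t : ℝ, Even (Finset.univ.filter (fun i => μ i = t)).card) :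
    ∑ i, μ i ^ 4 = (∑ i, μ i ^ 2) ^ 2 / 4 := by
  classical
  set S : Finset ℝ := Finset.univ.image μ with hS
  set m : ℝ → ℕ := fun t => (Finset.univ.filter (fun i => μ i = t)).card with hm
  have hsum : ∀ ρ : ℝ → ℝ, ∑ i, ρ (μ i) = ∑ t ∈ S, (m t : ℝ) * ρ t := by
    intro ρ
    rw [Finset.sum_comp ρ μ]
    refine Finset.sum_congr rfl fun t _ => ?_
    rw [nsmul_eq_mul]
  have hm2 : ∀ t, (m t : ℝ) = 2 * ((m t / 2 : ℕ) : ℝ) := by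
    intro t
    obtain ⟨r, hr⟩ := hev t
    have h' : m t = r + r := hr
    have h'' : m t / 2 = r := by omega
    rw [h'', h']; push_cast; ring
  -- build the "half" multiset
  set T : Multiset ℝ := S.val.bind (fun t => Multiset.replicate (m t / 2) t) with hT
  have hTmap : ∀ ρ : ℝ → ℝ, (T.map ρ).sum = ∑ t ∈ S, ((m t / 2 : ℕ) : ℝ) * ρ t := by
    intro ρ
    rw [hT, Multiset.map_bind, Multiset.sum_bind, Finset.sum]
    apply congrArg Multiset.sum
    apply Multiset.map_congr rfl
    intro a _
    rw [Multiset.map_replicate, Multiset.sum_replicate, nsmul_eq_mul]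
  have hcard6 : ∑ t ∈ S, m t = 6 := by
    have := Finset.card_eq_sum_card_image μ (Finset.univ : Finset (Fin 6))
    simpa [hS, hm] using this.symm
  have hcard3 : ∑ t ∈ S, m t / 2 = 3 := by
    have he : ∑ t ∈ S, m t = ∑ t ∈ S, 2 * (m t / 2) := by
      refine Finset.sum_congr rfl fun t _ => ?_
      obtain ⟨r, hr⟩ := hev t
      have : m t = r + r := hr
      omega
    have he2 : ∑ t ∈ S, 2 * (m t / 2) = 2 * ∑ t ∈ S, m t / 2 := (Finset.mul_sum _ _ _).symm
    omega
  have hTcard : Multiset.card T = 3 := by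
    rw [hT, Multiset.card_bind]
    have hfn : (Multiset.card ∘ fun t => Multiset.replicate (m t / 2) t) =
        fun t => m t / 2 := by
      funext t; simp
    rw [hfn]
    exact hcard3
  obtain ⟨a, b, c, habc⟩ := Multiset.card_eq_three.mp hTcard
  have hk : ∀ ρ : ℝ → ℝ, ∑ i, ρ (μ i) = 2 * (ρ a + ρ b + ρ c) := by
    intro ρ
    rw [hsum ρ]
    have h2' : ∑ t ∈ S, (m t : ℝ) * ρ t = 2 * ∑ t ∈ S, ((m t / 2 : ℕ) : ℝ) * ρ t := by
      rw [Finset.mul_sum]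
      refine Finset.sum_congr rfl fun t _ => ?_
      rw [hm2 t]; ring
    rw [h2', ← hTmap ρ, habc]
    simp [Multiset.insert_eq_cons]
    ring
  have ha0 : 2 * (a + b + c) = 0 := by
    rw [← hk (fun x => x)]; exact h1
  have h4 := hk (fun x => x ^ 4)
  have h2 := hk (fun x => x ^ 2)
  rw [h4, h2]
  have hc : c = -a - b := by linarith
  rw [hc]; ring

/-- Key identity: a symmetric trace-free endomorphism of a `6`-dimensional real inner
product space commuting with a complex structure `J` satisfies `tr(X⁴) = tr(X²)²/4`. -/
lemma key_trace_identity
    {V : Type*} [NormedAddCommGroup V] [InnerProductSpace ℝ V] [FiniteDimensional ℝ V]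
    (hdim : Module.finrank ℝ V = 6) (J : Module.End ℝ V) (hJ2 : J * J = -1)
    (X : Module.End ℝ V) (hX : LinearMap.IsSymmetric X) (hXJ : X * J = J * X)
    (htr : LinearMap.trace ℝ V X = 0) :
    LinearMap.trace ℝ V (X ^ 4) = (LinearMap.trace ℝ V (X ^ 2)) ^ 2 / 4 := by
  classical
  set b := hX.eigenvectorBasis hdim with hb
  set μ := hX.eigenvalues hdim with hμ
  have happ : ∀ i, X (b i) = μ i • b i := by
    intro i
    rw [hb, hμ]
    simpa using hX.apply_eigenvectorBasis hdim i
  have hpow : ∀ (n : ℕ) (i : Fin 6), (X ^ n) (b i) = μ i ^ n • b i := by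
    intro n
    induction n with
    | zero => intro i; simp
    | succ n ih =>
      intro i
      rw [pow_succ, Module.End.mul_apply, happ i, map_smul, ih i, smul_smul, pow_succ]
      ring_nf
  -- traces as sums of powers of eigenvalues
  have htrk : ∀ n : ℕ, LinearMap.trace ℝ V (X ^ n) = ∑ i, μ i ^ n := by
    intro n
    refine trace_eq_sum_diag' b.toBasis (X ^ n) (fun i => μ i ^ n) ?_
    intro i
    rw [OrthonormalBasis.coe_toBasis]
    exact hpow n i
  have hsum0 : ∑ i, μ i = 0 := by
    have h1 := htrk 1
    simp only [pow_one] at h1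
    rw [← h1, htr]
  -- even multiplicities
  have hev : ∀ t : ℝ, Even (Finset.univ.filter (fun i => μ i = t)).card := by
    intro t
    set P : Finset (Fin 6) := Finset.univ.filter (fun i => μ i = t) with hP
    set E : Submodule ℝ V := Module.End.eigenspace X t with hE
    -- the eigenspace is spanned by the basis vectors with eigenvalue t
    have hmem : ∀ i ∈ P, b i ∈ E := by
      intro i hi
      rw [hE, Module.End.mem_eigenspace_iff, happ i]
      rw [hP, Finset.mem_filter] at hi
      rw [hi.2]
    have hspan : E = Submodule.span ℝ (Set.range (fun i : {i // i ∈ P} => b i.1)) := by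
      apply le_antisymm
      · intro v hv
        have hco : ∀ i, i ∉ P → ⟪b i, v⟫ = 0 := by
          intro i hi
          have h1 : ⟪X (b i), v⟫ = ⟪b i, X v⟫ := hX (b i) v
          have h2 : X v = t • v := (Module.End.mem_eigenspace_iff).mp hv
          rw [happ i, h2, real_inner_smul_left, real_inner_smul_right] at h1
          have hne : μ i ≠ t := by
            rw [hP, Finset.mem_filter] at hi
            intro hh; exact hi ⟨Finset.mem_univ i, hh⟩
          by_contra hzero
          exact hne (mul_right_cancel₀ hzero h1)
        have hrep : v = ∑ i ∈ P, ⟪b i, v⟫ • b i := by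
          have hr := b.sum_repr' v
          conv_lhs => rw [← hr]
          exact (Finset.sum_subset (Finset.subset_univ P)
            (fun i _ hi => by rw [hco i hi, zero_smul])).symm
        rw [hrep]
        refine Submodule.sum_mem _ fun i hi => ?_
        exact Submodule.smul_mem _ _ (Submodule.subset_span ⟨⟨i, hi⟩, rfl⟩)
      · rw [Submodule.span_le]
        rintro x ⟨⟨i, hi⟩, rfl⟩
        exact hmem i hi
    have hfr : Module.finrank ℝ E = P.card := by
      rw [hspan]
      have hli : LinearIndependent ℝ (fun i : {i // i ∈ P} => b i.1) := by
        have h0 := b.orthonormal.linearIndependent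
        exact h0.comp Subtype.val Subtype.val_injective
      rw [finrank_span_eq_card hli, Fintype.card_coe]
    have hJE : ∀ w ∈ E, J w ∈ E := by
      intro w hw
      rw [hE, Module.End.mem_eigenspace_iff] at hw ⊢
      have : X (J w) = J (X w) := by
        rw [← Module.End.mul_apply, ← Module.End.mul_apply, hXJ]
      rw [this, hw, map_smul]
    have hj : J.restrict hJE * J.restrict hJE = -1 := by
      ext w
      have h1 : ((J.restrict hJE * J.restrict hJE) w : V) = J (J (w : V)) := by
        simp [Module.End.mul_apply, LinearMap.restrict_apply]
      have h2 : J (J (w : V)) = -(w : V) := by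
        have := congrArg (fun f : Module.End ℝ V => f (w : V)) hJ2
        simpa [Module.End.mul_apply] using this
      rw [h1, h2]
      simp
    have heven := even_finrank_of_sq_neg_one (J.restrict hJE) hj
    rw [hfr] at heven
    exact heven
  have h4 := htrk 4
  have h2 := htrk 2
  rw [h4, h2]
  exact sum_pow_four_of_paired μ hsum0 hev

end Aux

/-- If trace-free symmetric endomorphisms `A, B₁, …, B_k` of a 6-dimensional Hermitian
vector space `(V, J)` commute with `J` and satisfy `A² = λ²·Id + Σ B_r²`, then `λ = 0`
and the endomorphisms `A², B₁², …, B_k²` are pairwise positively collinear. -/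
theorem lambda_eq_zero_and_collinear
    {V : Type*} [NormedAddCommGroup V] [InnerProductSpace ℝ V] [FiniteDimensional ℝ V]
    (hdim : Module.finrank ℝ V = 6)
    (J : Module.End ℝ V)
    (hJ2 : J * J = -1)
    (hJorth : ∀ v w : V, ⟪J v, J w⟫ = ⟪v, w⟫)
    (k : ℕ) (A : Module.End ℝ V) (B : Fin k → Module.End ℝ V) (lam : ℝ)
    (hAsymm : LinearMap.IsSymmetric A) (hBsymm : ∀ r, LinearMap.IsSymmetric (B r))
    (hAtr : LinearMap.trace ℝ V A = 0) (hBtr : ∀ r, LinearMap.trace ℝ V (B r) = 0)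
    (hAcomm : A * J = J * A) (hBcomm : ∀ r, B r * J = J * B r)
    (heq : A ^ 2 = lam ^ 2 • (1 : Module.End ℝ V) + ∑ r, B r ^ 2) :
    lam = 0 ∧
    (∀ r s, B s ^ 2 ≠ 0 → ∃ c : ℝ, 0 ≤ c ∧ B r ^ 2 = c • B s ^ 2) ∧
    (∀ s, B s ^ 2 ≠ 0 → ∃ c : ℝ, 0 ≤ c ∧ A ^ 2 = c • B s ^ 2) ∧
    (A ^ 2 ≠ 0 → ∀ r, ∃ c : ℝ, 0 ≤ c ∧ B r ^ 2 = c • A ^ 2) := by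
  classical
  set ι := Fin (Module.finrank ℝ V) with hι
  set b : OrthonormalBasis ι ℝ V := stdOrthonormalBasis ℝ V with hbdef
  -- the ℓ² space of tuples of vectors, for Cauchy-Schwarz
  let E := PiLp 2 (fun _ : ι => V)
  let vec : Module.End ℝ V → E := fun P => (WithLp.equiv 2 _).symm (fun i => P (b i))
  have hvec_apply : ∀ P i, vec P i = P (b i) := fun P i => rfl
  have hinner : ∀ P Q : Module.End ℝ V, ⟪vec P, vec Q⟫ = ∑ i, ⟪P (b i), Q (b i)⟫ := by
    intro P Q
    rw [PiLp.inner_apply]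
    rfl
  have hvec_zero : ∀ P : Module.End ℝ V, vec P = 0 → P = 0 := by
    intro P h0
    apply b.toBasis.ext
    intro i
    rw [OrthonormalBasis.coe_toBasis]
    have := congrFun (congrArg (WithLp.equiv 2 (∀ _ : ι, V)) h0) i
    exact this
  -- traces of products as inner products
  have htrPQ : ∀ P Q : Module.End ℝ V, LinearMap.IsSymmetric P →
      LinearMap.trace ℝ V (P * Q) = ⟪vec P, vec Q⟫ := by
    intro P Q hP
    rw [trace_eq_sum_inner' b (P * Q), hinner]
    refine Finset.sum_congr rfl fun i _ => ?_
    rw [Module.End.mul_apply]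
    exact (hP (b i) (Q (b i))).symm
  have hMsymm : ∀ r, LinearMap.IsSymmetric (B r ^ 2) := by
    intro r x y
    rw [pow_two, Module.End.mul_apply, Module.End.mul_apply]
    rw [hBsymm r, hBsymm r]
  -- traces of squares
  set τ : Fin k → ℝ := fun r => LinearMap.trace ℝ V (B r ^ 2) with hτdef
  have hτ_inner : ∀ r, τ r = ⟪vec (B r), vec (B r)⟫ := by
    intro r
    rw [hτdef]
    simp only
    rw [pow_two, htrPQ _ _ (hBsymm r)]
  have hτ0 : ∀ r, 0 ≤ τ r := fun r => (hτ_inner r) ▸ real_inner_self_nonneg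
  have hkey : ∀ r, LinearMap.trace ℝ V (B r ^ 2 * B r ^ 2) = (τ r) ^ 2 / 4 := by
    intro r
    have h44 : B r ^ 2 * B r ^ 2 = B r ^ 4 := by
      rw [← pow_add]
    rw [h44]
    exact key_trace_identity hdim J hJ2 (B r) (hBsymm r) (hBcomm r) (hBtr r)
  have hnorm : ∀ r, ‖vec (B r ^ 2)‖ = τ r / 2 := by
    intro r
    have h1 : ‖vec (B r ^ 2)‖ ^ 2 = (τ r / 2) ^ 2 := by
      rw [← real_inner_self_eq_norm_sq, ← htrPQ _ _ (hMsymm r), hkey r]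
      ring
    have := (pow_left_inj₀ (norm_nonneg _) (div_nonneg (hτ0 r) (by norm_num)) (two_ne_zero)).mp h1
    exact this
  set T : ℝ := ∑ r, τ r with hTdef
  have hT0 : 0 ≤ T := Finset.sum_nonneg fun r _ => hτ0 r
  -- trace of A²
  have htrS : LinearMap.trace ℝ V (∑ r, B r ^ 2) = T := by
    rw [map_sum]
  have htrA2 : LinearMap.trace ℝ V (A ^ 2) = 6 * lam ^ 2 + T := by
    rw [heq, map_add, map_smul, LinearMap.trace_one, hdim, htrS, smul_eq_mul]
    push_cast; ring
  -- trace of A⁴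
  have htrSS : LinearMap.trace ℝ V ((∑ r, B r ^ 2) * (∑ s, B s ^ 2))
      = ∑ r, ∑ s, LinearMap.trace ℝ V (B r ^ 2 * B s ^ 2) := by
    rw [Finset.sum_mul_sum, map_sum]
    refine Finset.sum_congr rfl fun r _ => ?_
    rw [map_sum]
  have hA4 : A ^ 4 = A ^ 2 * A ^ 2 := by
    rw [← pow_add]
  have htrA4 : LinearMap.trace ℝ V (A ^ 4)
      = 6 * (lam ^ 2 * lam ^ 2) + 2 * lam ^ 2 * T
        + ∑ r, ∑ s, LinearMap.trace ℝ V (B r ^ 2 * B s ^ 2) := by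
    rw [hA4, heq]
    have hexp : (lam ^ 2 • (1 : Module.End ℝ V) + ∑ r, B r ^ 2) *
        (lam ^ 2 • (1 : Module.End ℝ V) + ∑ r, B r ^ 2)
        = (lam ^ 2 * lam ^ 2) • (1 : Module.End ℝ V)
          + (2 * lam ^ 2) • (∑ r, B r ^ 2)
          + (∑ r, B r ^ 2) * (∑ s, B s ^ 2) := by
      simp only [add_mul, mul_add, smul_mul_assoc, mul_smul_comm, one_mul, mul_one,
        smul_smul]
      module
    rw [hexp, map_add, map_add, map_smul, map_smul, LinearMap.trace_one, hdim, htrS, htrSS,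
      smul_eq_mul, smul_eq_mul]
    push_cast; ring
  -- the key equation
  have hAid := key_trace_identity hdim J hJ2 A hAsymm hAcomm hAtr
  rw [htrA4, htrA2] at hAid
  -- Cauchy-Schwarz bounds
  have hbound : ∀ r s, LinearMap.trace ℝ V (B r ^ 2 * B s ^ 2) ≤ (τ r / 2) * (τ s / 2) := by
    intro r s
    rw [htrPQ _ _ (hMsymm r)]
    calc ⟪vec (B r ^ 2), vec (B s ^ 2)⟫ ≤ ‖vec (B r ^ 2)‖ * ‖vec (B s ^ 2)‖ :=
          real_inner_le_norm _ _
      _ = (τ r / 2) * (τ s / 2) := by rw [hnorm r, hnorm s]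
  have hsumbound : ∑ r, ∑ s, LinearMap.trace ℝ V (B r ^ 2 * B s ^ 2)
      ≤ (T / 2) * (T / 2) := by
    have h1 : ∑ r, ∑ s, LinearMap.trace ℝ V (B r ^ 2 * B s ^ 2)
        ≤ ∑ r, ∑ s, (τ r / 2) * (τ s / 2) :=
      Finset.sum_le_sum fun r _ => Finset.sum_le_sum fun s _ => hbound r s
    have h2 : ∑ r, ∑ s, (τ r / 2) * (τ s / 2) = (T / 2) * (T / 2) := by
      rw [← Finset.sum_mul_sum, hTdef, Finset.sum_div]
    linarith
  -- conclude λ = 0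
  have hlam : lam = 0 := by
    have hl2 : lam ^ 2 = 0 := by nlinarith [sq_nonneg lam, sq_nonneg (lam ^ 2)]
    exact pow_eq_zero_iff (two_ne_zero (α := ℕ)) |>.mp hl2
  -- with λ = 0, equality holds everywhere in Cauchy-Schwarz
  have hEqsum : ∑ r, ∑ s, LinearMap.trace ℝ V (B r ^ 2 * B s ^ 2)
      = ∑ r, ∑ s, (τ r / 2) * (τ s / 2) := by
    have h2 : ∑ r, ∑ s, (τ r / 2) * (τ s / 2) = (T / 2) * (T / 2) := by
      rw [← Finset.sum_mul_sum, hTdef, Finset.sum_div]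
    rw [h2]
    rw [hlam] at hAid
    nlinarith [hAid]
  have hEq : ∀ r s, LinearMap.trace ℝ V (B r ^ 2 * B s ^ 2) = (τ r / 2) * (τ s / 2) := by
    intro r s
    have ho := (Finset.sum_eq_sum_iff_of_le
      (fun r (_ : r ∈ Finset.univ) =>
        Finset.sum_le_sum fun s _ => hbound r s)).mp hEqsum r (Finset.mem_univ r)
    exact (Finset.sum_eq_sum_iff_of_le fun s _ => hbound r s).mp ho s (Finset.mem_univ s)
  have hpair : ∀ r s, ⟪vec (B r ^ 2), vec (B s ^ 2)⟫
      = ‖vec (B r ^ 2)‖ * ‖vec (B s ^ 2)‖ := by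
    intro r s
    rw [← htrPQ _ _ (hMsymm r), hEq r s, hnorm r, hnorm s]
  -- collinearity
  have hcol : ∀ r s, B s ^ 2 ≠ 0 →
      B r ^ 2 = (‖vec (B r ^ 2)‖ / ‖vec (B s ^ 2)‖) • B s ^ 2 := by
    intro r s hs
    have hvs : vec (B s ^ 2) ≠ 0 := fun h0 => hs (hvec_zero _ h0)
    have hns : ‖vec (B s ^ 2)‖ ≠ 0 := norm_ne_zero_iff.mpr hvs
    have heqn := inner_eq_norm_mul_iff_real.mp (hpair r s)
    apply b.toBasis.ext
    intro i
    rw [OrthonormalBasis.coe_toBasis]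
    have hcomp : ‖vec (B s ^ 2)‖ • (B r ^ 2) (b i) = ‖vec (B r ^ 2)‖ • (B s ^ 2) (b i) := by
      have := congrArg (fun x : E => x i) heqn
      exact this
    rw [LinearMap.smul_apply]
    have := congrArg (fun v => ‖vec (B s ^ 2)‖⁻¹ • v) hcomp
    simp only [smul_smul, inv_mul_cancel₀ hns, one_smul] at this
    rw [this, div_eq_inv_mul]
  refine ⟨hlam, ?_, ?_, ?_⟩
  · intro r s hs
    exact ⟨_, div_nonneg (norm_nonneg _) (norm_nonneg _), hcol r s hs⟩
  · intro s hs
    have heqA : A ^ 2 = ∑ r, B r ^ 2 := by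
      rw [heq, hlam]
      simp
    refine ⟨∑ r, ‖vec (B r ^ 2)‖ / ‖vec (B s ^ 2)‖,
      Finset.sum_nonneg fun r _ => div_nonneg (norm_nonneg _) (norm_nonneg _), ?_⟩
    rw [heqA, Finset.sum_smul]
    exact Finset.sum_congr rfl fun r _ => hcol r s hs
  · intro hA2 r
    have heqA : A ^ 2 = ∑ r, B r ^ 2 := by
      rw [heq, hlam]
      simp
    have hex : ∃ s, B s ^ 2 ≠ 0 := by
      by_contra hc
      push_neg at hc
      apply hA2
      rw [heqA]
      exact Finset.sum_eq_zero fun s _ => hc s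
    obtain ⟨s, hs⟩ := hex
    set C : ℝ := ∑ r', ‖vec (B r' ^ 2)‖ / ‖vec (B s ^ 2)‖ with hCdef
    have hAC : A ^ 2 = C • B s ^ 2 := by
      rw [heqA, hCdef, Finset.sum_smul]
      exact Finset.sum_congr rfl fun r' _ => hcol r' s hs
    have hC0 : 0 ≤ C :=
      Finset.sum_nonneg fun r' _ => div_nonneg (norm_nonneg _) (norm_nonneg _)
    have hCne : C ≠ 0 := by
      intro h0
      apply hA2
      rw [hAC, h0, zero_smul]
    have hBs : B s ^ 2 = C⁻¹ • A ^ 2 := by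
      rw [hAC, smul_smul, inv_mul_cancel₀ hCne, one_smul]
    have hfin : B r ^ 2 = (‖vec (B r ^ 2)‖ / ‖vec (B s ^ 2)‖ * C⁻¹) • A ^ 2 := by
      calc B r ^ 2 = (‖vec (B r ^ 2)‖ / ‖vec (B s ^ 2)‖) • B s ^ 2 := hcol r s hs
        _ = (‖vec (B r ^ 2)‖ / ‖vec (B s ^ 2)‖) • (C⁻¹ • A ^ 2) := by rw [← hBs]
        _ = (‖vec (B r ^ 2)‖ / ‖vec (B s ^ 2)‖ * C⁻¹) • A ^ 2 := by rw [smul_smul]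
    exact ⟨‖vec (B r ^ 2)‖ / ‖vec (B s ^ 2)‖ * C⁻¹,
      mul_nonneg (div_nonneg (norm_nonneg _) (norm_nonneg _)) (inv_nonneg.mpr hC0), hfin⟩
end

section
/- Let A and B be trace-free symmetric endomorphisms of a 6-dimensional Hermitian vector space (V, J) commuting with the complex structure J, and suppose A^2 = a^2·B^2 for some real number a. If B is invertible, then A = a·B or A = -a·B. -/
open scoped RealInnerProductSpace

open Polynomial in
theorem aux_cube {W : Type*} [AddCommGroup W] [Module ℂ W] [FiniteDimensional ℂ W]
    (h3 : Module.finrank ℂ W = 3) (T : Module.End ℂ W)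
    (htr : LinearMap.trace ℂ W T = 0) :
    T ^ 3 + T.charpoly.coeff 1 • T = LinearMap.det T • (1 : Module.End ℂ W) := by
  classical
  have hmon : T.charpoly.Monic := T.charpoly_monic
  have hdeg : T.charpoly.natDegree = 3 := by rw [T.charpoly_natDegree, h3]
  have b := Module.finBasisOfFinrankEq ℂ W h3
  have hc2 : T.charpoly.coeff 2 = 0 := by
    have h1 := Matrix.trace_eq_neg_charpoly_coeff (LinearMap.toMatrix b b T)
    rw [LinearMap.charpoly_toMatrix] at h1
    rw [← LinearMap.trace_eq_matrix_trace ℂ b T, htr] at h1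
    simpa using h1.symm
  have hc0 : T.charpoly.coeff 0 = -LinearMap.det T := by
    have h1 := Matrix.det_eq_sign_charpoly_coeff (LinearMap.toMatrix b b T)
    rw [LinearMap.charpoly_toMatrix, LinearMap.det_toMatrix] at h1
    simp at h1
    rw [h1]; ring
  have hc3 : T.charpoly.coeff 3 = 1 := by
    have := hmon
    rwa [Polynomial.Monic, Polynomial.leadingCoeff, hdeg] at this
  have h0 := T.aeval_self_charpoly
  rw [T.charpoly.as_sum_range' 4 (by omega)] at h0
  simp only [Finset.sum_range_succ, Finset.sum_range_zero, zero_add, map_add, map_neg,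
    aeval_monomial, map_zero, zero_mul, add_zero, pow_zero, pow_one, map_one, one_mul, mul_one,
    Algebra.algebraMap_eq_smul_one, smul_mul_assoc] at h0
  rw [hc0, hc2, hc3] at h0
  simp only [zero_smul, one_smul, neg_smul, add_zero, zero_add] at h0
  rw [add_assoc, neg_add_eq_zero] at h0
  rw [add_comm]
  exact h0.symm

theorem aux_complex {W : Type*} [AddCommGroup W] [Module ℂ W] [FiniteDimensional ℂ W]
    (h3 : Module.finrank ℂ W = 3) (C D : Module.End ℂ W)
    (hCtr : LinearMap.trace ℂ W C = 0) (hDtr : LinearMap.trace ℂ W D = 0)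
    (hsq : C ^ 2 = D ^ 2) (hD : IsUnit D)
    (hD2 : LinearMap.trace ℂ W (D ^ 2) ≠ 0) :
    C = D ∨ C = -D := by
  classical
  obtain hC3 := aux_cube h3 C hCtr
  obtain hD3 := aux_cube h3 D hDtr
  set s : ℂ := C.charpoly.coeff 1 with hs
  set s' : ℂ := D.charpoly.coeff 1 with hs'
  -- trace identities give s = s'
  have hmul : ∀ (T : Module.End ℂ W) (c : ℂ), T ^ 3 + c • T = LinearMap.det T • 1 →
      LinearMap.trace ℂ W T = 0 →
      LinearMap.trace ℂ W (T ^ 4) + c * LinearMap.trace ℂ W (T ^ 2) = 0 := by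
    intro T c h htr0
    have h4 : T ^ 4 + c • T ^ 2 = LinearMap.det T • T := by
      have := congrArg (· * T) h
      simpa [add_mul, smul_mul_assoc, ← pow_succ, ← sq] using this
    have := congrArg (LinearMap.trace ℂ W) h4
    simpa [map_add, map_smul, smul_eq_mul, htr0] using this
  have htC := hmul C s hC3 hCtr
  have htD := hmul D s' hD3 hDtr
  have h42 : C ^ 4 = D ^ 4 := by
    rw [show (4:ℕ) = 2*2 from rfl, pow_mul, pow_mul, hsq]
  rw [h42, hsq] at htC
  have hss : s = s' := mul_right_cancel₀ hD2 (add_left_cancel (htC.trans htD.symm))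
  rw [hss] at hC3
  -- determinants
  have hdet2 : LinearMap.det C ^ 2 = LinearMap.det D ^ 2 := by
    rw [← map_pow, ← map_pow, hsq]
  have hdetD : LinearMap.det D ≠ 0 := by
    have := hD.map LinearMap.det
    exact this.ne_zero
  have e1 : C * (D ^ 2 + s' • 1) = LinearMap.det C • 1 := by
    rw [mul_add, mul_smul_comm, mul_one, ← hsq, ← pow_succ']
    exact hC3
  have e2 : D * (D ^ 2 + s' • 1) = LinearMap.det D • 1 := by
    rw [mul_add, mul_smul_comm, mul_one, ← pow_succ']
    exact hD3
  have humul : (D ^ 2 + s' • 1) * ((LinearMap.det D)⁻¹ • D) = 1 := by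
    rw [mul_smul_comm, add_mul, smul_mul_assoc, one_mul, ← pow_succ, hD3, smul_smul,
      inv_mul_cancel₀ hdetD, one_smul]
  have humul' : ((LinearMap.det D)⁻¹ • D) * (D ^ 2 + s' • 1) = 1 := by
    rw [smul_mul_assoc, mul_add, mul_smul_comm, mul_one, ← pow_succ', hD3, smul_smul,
      inv_mul_cancel₀ hdetD, one_smul]
  have hu : IsUnit (D ^ 2 + s' • 1) := ⟨⟨_, _, humul, humul'⟩, rfl⟩
  have hcancel : ∀ X : Module.End ℂ W, X * (D ^ 2 + s' • 1) = 0 → X = 0 := by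
    intro X hX
    obtain ⟨u, huu⟩ := hu
    rw [← huu] at hX
    have hXu : X = X * ↑u * ↑u⁻¹ := by rw [mul_assoc, u.mul_inv, mul_one]
    rw [hXu, hX, zero_mul]
  have hdd : LinearMap.det C = LinearMap.det D ∨ LinearMap.det C = -LinearMap.det D := by
    rcases mul_eq_zero.mp (show (LinearMap.det C - LinearMap.det D) *
        (LinearMap.det C + LinearMap.det D) = 0 by ring_nf; linear_combination hdet2) with h | h
    · exact Or.inl (sub_eq_zero.mp h)
    · exact Or.inr (eq_neg_of_add_eq_zero_left h)
  rcases hdd with hcase | hcase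
  · left
    have h0 : (C - D) * (D ^ 2 + s' • 1) = 0 := by
      rw [sub_mul, e1, e2, hcase, sub_self]
    exact sub_eq_zero.mp (hcancel _ h0)
  · right
    have h0 : (C + D) * (D ^ 2 + s' • 1) = 0 := by
      rw [add_mul, e1, e2, hcase, neg_smul, neg_add_cancel]
    exact eq_neg_of_add_eq_zero_left (hcancel _ h0)

/-- If `A` and `B` are trace-free symmetric endomorphisms of a 6-dimensional Hermitian
vector space `(V, J)` commuting with `J`, `A² = a²·B²` for some real `a`, and `B` is
invertible, then `A = a·B` or `A = -a·B`. -/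
theorem eq_smul_of_sq_eq_sq
    {V : Type*} [NormedAddCommGroup V] [InnerProductSpace ℝ V] [FiniteDimensional ℝ V]
    (hdim : Module.finrank ℝ V = 6)
    (J A B : Module.End ℝ V)
    (hJ2 : J * J = -1)
    (hJorth : ∀ v w : V, ⟪J v, J w⟫ = ⟪v, w⟫)
    (hAsymm : LinearMap.IsSymmetric A) (hBsymm : LinearMap.IsSymmetric B)
    (hAtr : LinearMap.trace ℝ V A = 0) (hBtr : LinearMap.trace ℝ V B = 0)
    (hAcomm : A * J = J * A) (hBcomm : B * J = J * B)
    (a : ℝ) (hsq : A ^ 2 = a ^ 2 • B ^ 2)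
    (hBinv : IsUnit B) :
    A = a • B ∨ A = (-a) • B := by
  classical
  rcases eq_or_ne a 0 with ha | ha
  · left
    subst ha
    have hA2 : ∀ v, A (A v) = 0 := by
      intro v
      have := LinearMap.congr_fun hsq v
      simpa [pow_two, Module.End.mul_apply] using this
    have hA0 : A = 0 := by
      ext v
      have h1 : ⟪A v, A v⟫ = 0 := by
        rw [hAsymm v (A v), hA2, inner_zero_right]
      simpa using inner_self_eq_zero.mp h1
    rw [hA0, zero_smul]
  · have hJJ : ∀ v : V, J (J v) = -v := by
      intro v
      have := LinearMap.congr_fun hJ2 v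
      simpa using this
    set b := stdOrthonormalBasis ℝ V with hb
    have htr : ∀ T : Module.End ℝ V, LinearMap.trace ℝ V T = ∑ i, ⟪b i, T (b i)⟫ := by
      intro T
      rw [LinearMap.trace_eq_matrix_trace ℝ b.toBasis, Matrix.trace]
      apply Finset.sum_congr rfl
      intro i _
      simp [Matrix.diag, LinearMap.toMatrix_apply, OrthonormalBasis.coe_toBasis,
        OrthonormalBasis.coe_toBasis_repr_apply, OrthonormalBasis.repr_apply_apply]
    have htrJ : ∀ T : Module.End ℝ V, LinearMap.IsSymmetric T →
        LinearMap.trace ℝ V (J * T) = 0 := by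
      intro T hT
      have h1 : LinearMap.trace ℝ V (J * T) = LinearMap.trace ℝ V (T * J) :=
        LinearMap.trace_mul_comm ℝ J T
      have h3 : LinearMap.trace ℝ V (T * J) = - LinearMap.trace ℝ V (J * T) := by
        rw [htr, htr, ← Finset.sum_neg_distrib]
        refine Finset.sum_congr rfl fun i _ => ?_
        calc ⟪b i, (T * J) (b i)⟫ = ⟪T (b i), J (b i)⟫ := by
              rw [Module.End.mul_apply, ← hT (b i) (J (b i))]
          _ = ⟪J (T (b i)), J (J (b i))⟫ := (hJorth _ _).symm
          _ = -⟪b i, (J * T) (b i)⟫ := by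
              rw [hJJ, inner_neg_right, Module.End.mul_apply, real_inner_comm]
      linarith [h1.trans h3]
    letI : Module ℂ V := Module.compHom V (Complex.liftAux J hJ2).toRingHom
    have hsm : ∀ (z : ℂ) (v : V), z • v = z.re • v + z.im • J v := by
      intro z v
      show (Complex.liftAux J hJ2 z) v = _
      simp [Complex.liftAux_apply, Module.algebraMap_end_apply]
    haveI : IsScalarTower ℝ ℂ V := ⟨fun r z v => by
      rw [hsm, hsm, smul_add, Complex.smul_re, Complex.smul_im]
      simp [smul_smul, smul_eq_mul]⟩
    haveI : FiniteDimensional ℂ V := FiniteDimensional.right ℝ ℂ V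
    have h3 : Module.finrank ℂ V = 3 := by
      have hm := Module.finrank_mul_finrank (F := ℝ) (K := ℂ) (A := V)
      rw [Complex.finrank_real_complex, hdim] at hm
      omega
    have hAJ : ∀ v, A (J v) = J (A v) := fun v => LinearMap.congr_fun hAcomm v
    have hBJ : ∀ v, B (J v) = J (B v) := fun v => LinearMap.congr_fun hBcomm v
    set C' : V →ₗ[ℂ] V :=
      { toFun := fun v => A v
        map_add' := fun x y => map_add A x y
        map_smul' := fun z v => by
          simp only [RingHom.id_apply, hsm, map_add, LinearMap.map_smul, hAJ] } with hC'def
    set D' : V →ₗ[ℂ] V :=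
      { toFun := fun v => a • B v
        map_add' := fun x y => by simp only [map_add, smul_add]
        map_smul' := fun z v => by
          simp only [RingHom.id_apply, hsm, map_add, LinearMap.map_smul, hBJ, smul_add,
            smul_smul, smul_eq_mul]
          rw [mul_comm a z.re, mul_comm a z.im] } with hD'def
    have hC'v : ∀ v, C' v = A v := fun v => rfl
    have hD'v : ∀ v, D' v = a • B v := fun v => rfl
    have hsq' : C' ^ 2 = D' ^ 2 := by
      apply LinearMap.ext
      intro v
      have hv := LinearMap.congr_fun hsq v
      rw [pow_two, pow_two, Module.End.mul_apply, Module.End.mul_apply]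
      rw [pow_two, pow_two] at hv
      simp only [LinearMap.smul_apply, Module.End.mul_apply] at hv
      rw [hC'v, hC'v, hD'v, hD'v, hv]
      simp [map_smul, smul_smul, pow_two]
    let cb : Module.Basis (Fin 3) ℂ V := Module.finBasisOfFinrankEq ℂ V h3
    have htrans : ∀ (T' : V →ₗ[ℂ] V) (T : Module.End ℝ V), (∀ v, T' v = T v) →
        LinearMap.trace ℝ V T = 2 * (LinearMap.trace ℂ V T').re := by
      intro T' T hTT
      have hrw : ∀ (z : ℂ) (j : Fin 3), T (z • cb j) = z • T' (cb j) := by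
        intro z j
        rw [← hTT, map_smul]
      rw [LinearMap.trace_eq_matrix_trace ℝ (Complex.basisOneI.smulTower cb) T,
          LinearMap.trace_eq_matrix_trace ℂ cb T', Matrix.trace, Matrix.trace]
      simp only [Matrix.diag, LinearMap.toMatrix_apply, Module.Basis.smulTower_repr,
        Module.Basis.smulTower_apply]
      rw [Fintype.sum_prod_type, Fin.sum_univ_two]
      simp only [Complex.coe_basisOneI, Matrix.cons_val_zero, Matrix.cons_val_one,
        Matrix.head_cons, one_smul, hrw, ← hTT, map_smul, Finsupp.smul_apply, smul_eq_mul,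
        Complex.coe_basisOneI_repr]
      simp only [Complex.mul_re, Complex.mul_im, Complex.I_re, Complex.I_im]
      rw [Complex.re_sum, Finset.mul_sum, ← Finset.sum_add_distrib]
      refine Finset.sum_congr rfl fun j _ => ?_
      ring
    have hIC : ∀ (T' : V →ₗ[ℂ] V), (Complex.I * LinearMap.trace ℂ V T').re =
        -(LinearMap.trace ℂ V T').im := by
      intro T'
      simp [Complex.mul_re]
    have htr0 : ∀ (T' : V →ₗ[ℂ] V) (T : Module.End ℝ V), (∀ v, T' v = T v) →
        LinearMap.trace ℝ V T = 0 → LinearMap.trace ℝ V (J * T) = 0 →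
        LinearMap.trace ℂ V T' = 0 := by
      intro T' T hTT hT1 hT2
      have h1 := htrans T' T hTT
      have h2 := htrans (Complex.I • T') (J * T) (fun v => by
        rw [LinearMap.smul_apply, hsm, hTT]
        simp [Module.End.mul_apply])
      rw [hT1] at h1
      rw [hT2, map_smul, smul_eq_mul, hIC] at h2
      apply Complex.ext <;> simp only [Complex.zero_re, Complex.zero_im] <;> linarith
    have hCtr' : LinearMap.trace ℂ V C' = 0 := by
      refine htr0 C' A hC'v hAtr ?_
      exact htrJ A hAsymm
    have hDtr' : LinearMap.trace ℂ V D' = 0 := by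
      refine htr0 D' (a • B) hD'v ?_ ?_
      · rw [map_smul, hBtr, smul_zero]
      · have : J * (a • B) = a • (J * B) := by
          rw [mul_smul_comm]
        rw [this, map_smul, htrJ B hBsymm, smul_zero]
    have hBbij := (Module.End.isUnit_iff B).mp hBinv
    have hBB : 0 < LinearMap.trace ℝ V (B * B) := by
      rw [htr]
      apply Finset.sum_pos'
      · intro i _
        rw [Module.End.mul_apply, ← hBsymm]
        exact real_inner_self_nonneg
      · refine ⟨⟨0, by rw [hdim]; omega⟩, Finset.mem_univ _, ?_⟩
        rw [Module.End.mul_apply, ← hBsymm]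
        have hne : b ⟨0, by rw [hdim]; omega⟩ ≠ 0 := by
          intro hb0
          exact b.toBasis.ne_zero _ (by rw [OrthonormalBasis.coe_toBasis]; exact hb0)
        have hBne : B (b ⟨0, by rw [hdim]; omega⟩) ≠ 0 := fun h =>
          hne (hBbij.injective (by rw [h, map_zero]))
        exact lt_of_le_of_ne real_inner_self_nonneg
          (Ne.symm fun h => hBne (inner_self_eq_zero.mp h))
    have hD2' : LinearMap.trace ℂ V (D' ^ 2) ≠ 0 := by
      have h1 := htrans (D' ^ 2) ((a • B) * (a • B)) (fun v => by
        rw [pow_two, Module.End.mul_apply, hD'v, hD'v]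
        simp [Module.End.mul_apply, map_smul, smul_smul])
      have h2 : LinearMap.trace ℝ V ((a • B) * (a • B)) = (a * a) * LinearMap.trace ℝ V (B * B) := by
        rw [smul_mul_assoc, mul_smul_comm, map_smul, map_smul, smul_eq_mul, smul_eq_mul]
        ring
      intro h0
      rw [h0, h2] at h1
      simp only [Complex.zero_re, mul_zero] at h1
      have hpos : 0 < a * a * LinearMap.trace ℝ V (B * B) :=
        mul_pos (mul_self_pos.mpr ha) hBB
      linarith
    have hDu : IsUnit D' := by
      rw [Module.End.isUnit_iff]
      constructor
      · intro x y hxy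
        rw [hD'v, hD'v] at hxy
        exact hBbij.injective (smul_right_injective V ha hxy)
      · intro w
        obtain ⟨x, hx⟩ := hBbij.surjective (a⁻¹ • w)
        refine ⟨x, ?_⟩
        rw [hD'v, hx, smul_inv_smul₀ ha]
    rcases aux_complex h3 C' D' hCtr' hDtr' hsq' hDu hD2' with h | h
    · left
      apply LinearMap.ext
      intro v
      have hv := LinearMap.congr_fun h v
      rw [hC'v, hD'v] at hv
      rw [LinearMap.smul_apply, hv]
    · right
      apply LinearMap.ext
      intro v
      have hv := LinearMap.congr_fun h v
      rw [hC'v] at hv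
      rw [LinearMap.smul_apply, hv]
      show -(D' v) = (-a) • B v
      rw [hD'v, neg_smul]
end

section
/- In the 3×3 real matrix setting: if X is symmetric and trace-free, Y is skew-symmetric, D is an invertible diagonal trace-free matrix, and the equations X^2 − Y^2 = D^2 and XY + YX = 0 hold, then Y = 0 and X = D or X = −D. -/
/-!
Since `X` and `Y` anticommute, both commute with `X² - Y² = D²`, so `X i j = Y i j = 0` whenever
`d i ² ≠ d j ²`. As the `d i` are nonzero and sum to zero, at most one pair `i ≠ j` has
`d i ² = d j ²`, and then the third index `k` is decoupled: `X k k ² = d k ² ≠ 0`, while by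
`tr X = 0` the `(i, j)` entries of `XY + YX = 0` and of `X² - Y² = D²` read `-X k k * Y i j = 0`
and `-X k k * X i j = 0`. Hence `Y = 0` and `X` is diagonal with `X i i ² = d i ²`, and the two
trace conditions force the signs to agree.
-/

open Matrix

theorem Fin.sum_univ_three_of_ne {M : Type*} [AddCommMonoid M] {i j k : Fin 3}
    (hij : i ≠ j) (hik : i ≠ k) (hjk : j ≠ k) (f : Fin 3 → M) :
    ∑ l, f l = f i + f j + f k := by
  have huniv : ({i, j, k} : Finset (Fin 3)) = Finset.univ :=
    Finset.eq_univ_of_card _ (Finset.card_eq_three.2 ⟨i, j, k, hij, hik, hjk, rfl⟩)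
  rw [← huniv, Finset.sum_insert (by simp [hij, hik]), Finset.sum_pair hjk, add_assoc]

theorem commute_sq_of_mul_add_mul_eq_zero {R : Type*} [Ring R] {a b : R}
    (h : a * b + b * a = 0) : Commute a (b ^ 2) := by
  have hab : a * b = -(b * a) := eq_neg_of_add_eq_zero_left h
  calc a * b ^ 2 = (a * b) * b := by rw [sq, mul_assoc]
    _ = b * (b * a) := by rw [hab, neg_mul, mul_assoc, hab, mul_neg, neg_neg]
    _ = b ^ 2 * a := by rw [sq, mul_assoc]

theorem commute_sq_sub_sq_of_mul_add_mul_eq_zero {R : Type*} [Ring R] {a b : R}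
    (h : a * b + b * a = 0) : Commute (a ^ 2 - b ^ 2) a ∧ Commute (a ^ 2 - b ^ 2) b :=
  ⟨((Commute.refl a).pow_left 2).sub_left (commute_sq_of_mul_add_mul_eq_zero h).symm,
    (commute_sq_of_mul_add_mul_eq_zero (by rwa [add_comm])).symm.sub_left
      ((Commute.refl b).pow_left 2)⟩

theorem Matrix.apply_eq_zero_of_commute_diagonal {n R : Type*} [Fintype n] [DecidableEq n]
    [CommRing R] [NoZeroDivisors R] {e : n → R} {M : Matrix n n R}
    (h : Commute (diagonal e) M) {i j : n} (hij : e i ≠ e j) : M i j = 0 := by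
  have hentry := congrFun (congrFun h.eq i) j
  rw [diagonal_mul, mul_diagonal] at hentry
  exact (mul_eq_zero.1 (by linear_combination hentry : (e i - e j) * M i j = 0)).resolve_left
    (sub_ne_zero.2 hij)

theorem sq_ne_sq_of_add_add_eq_zero {K : Type*} [Field K] [CharZero K] {a b c : K}
    (h : a + b + c = 0) (hc : c ≠ 0) (hab : a ^ 2 = b ^ 2) : c ^ 2 ≠ a ^ 2 := by
  intro hca
  rcases sq_eq_sq_iff_eq_or_eq_neg.1 hab with rfl | rfl
  · have ha : (3 : K) * a ^ 2 = 0 := by linear_combination hca - (c - 2 * a) * h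
    have ha : a = 0 := by simpa using ha
    exact hc (by linear_combination h - 2 * ha)
  · exact hc (by linear_combination h)

theorem fin_three_eq_or_eq_neg_of_sq_eq_sq {K : Type*} [Field K] [CharZero K] {x d : Fin 3 → K}
    (hx : x 0 + x 1 + x 2 = 0) (hd : d 0 + d 1 + d 2 = 0) (hd01 : d 0 * d 1 ≠ 0)
    (hsq : ∀ i, x i ^ 2 = d i ^ 2) : x = d ∨ x = -d := by
  have hx2 : x 2 = -(x 0 + x 1) := by linear_combination hx
  have hd2 : d 2 = -(d 0 + d 1) := by linear_combination hd
  have hsq2 := hsq 2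
  rw [hx2, hd2] at hsq2
  rcases sq_eq_sq_iff_eq_or_eq_neg.1 (hsq 0) with h0 | h0 <;>
    rcases sq_eq_sq_iff_eq_or_eq_neg.1 (hsq 1) with h1 | h1
  · left; ext i; fin_cases i <;> simp [h0, h1, hx2, hd2]
  · exact absurd (by rw [h0, h1] at hsq2; linear_combination -hsq2 / 4) hd01
  · exact absurd (by rw [h0, h1] at hsq2; linear_combination -hsq2 / 4) hd01
  · right; ext i; fin_cases i <;> simp [h0, h1, hx2, hd2]; ring

theorem Matrix.fin_three_apply_eq_zero_of_sq_sub_sq_eq_diagonal_sq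
    {X Y : Matrix (Fin 3) (Fin 3) ℝ} {d : Fin 3 → ℝ} (htr : X.trace = 0)
    (hYdiag : ∀ i, Y i i = 0) (hd : ∑ l, d l = 0) (h1 : X ^ 2 - Y ^ 2 = diagonal d ^ 2)
    (h2 : X * Y + Y * X = 0) {i j k : Fin 3} (hij : i ≠ j) (hik : i ≠ k) (hjk : j ≠ k)
    (hk : d k ≠ 0) : X i j = 0 ∧ Y i j = 0 := by
  obtain ⟨hXcomm, hYcomm⟩ := commute_sq_sub_sq_of_mul_add_mul_eq_zero h2
  rw [h1, diagonal_pow] at hXcomm hYcomm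
  have hX0 {a b : Fin 3} (hab : d a ^ 2 ≠ d b ^ 2) : X a b = 0 :=
    apply_eq_zero_of_commute_diagonal hXcomm hab
  have hY0 {a b : Fin 3} (hab : d a ^ 2 ≠ d b ^ 2) : Y a b = 0 :=
    apply_eq_zero_of_commute_diagonal hYcomm hab
  by_cases hdij : d i ^ 2 ≠ d j ^ 2
  · exact ⟨hX0 hdij, hY0 hdij⟩
  rw [not_not] at hdij
  have hki : d k ^ 2 ≠ d i ^ 2 :=
    sq_ne_sq_of_add_add_eq_zero (by rwa [Fin.sum_univ_three_of_ne hij hik hjk] at hd) hk hdij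
  have hkj : d k ^ 2 ≠ d j ^ 2 := hdij ▸ hki
  have hXkk : X k k ^ 2 = d k ^ 2 := by
    have hentry := congrFun (congrFun h1 k) k
    rw [diagonal_pow, diagonal_apply_eq, Pi.pow_apply, Matrix.sub_apply, sq, sq] at hentry
    simp only [mul_apply, Fin.sum_univ_three_of_ne hik.symm hjk.symm hij] at hentry
    rw [hX0 hki, hX0 hkj, hY0 hki, hY0 hkj, hYdiag] at hentry
    linear_combination hentry
  have hXkk0 : X k k ≠ 0 := fun h => hk (by simpa [h, eq_comm] using hXkk)
  have htr' : X i i + X j j = -X k k := by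
    simp only [trace, diag_apply, Fin.sum_univ_three_of_ne hij hik hjk] at htr
    linear_combination htr
  have hYij : Y i j = 0 := by
    have hentry := congrFun (congrFun h2 i) j
    simp only [Matrix.add_apply, Matrix.zero_apply, mul_apply,
      Fin.sum_univ_three_of_ne hij hik hjk] at hentry
    rw [hX0 hki.symm, hY0 hki.symm, hX0 hkj, hY0 hkj, hYdiag, hYdiag] at hentry
    refine mul_left_cancel₀ hXkk0 ?_
    linear_combination -hentry + Y i j * htr'
  refine ⟨mul_left_cancel₀ hXkk0 ?_, hYij⟩
  have hentry := congrFun (congrFun h1 i) j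
  rw [diagonal_pow, diagonal_apply_ne _ hij, Matrix.sub_apply, sq, sq] at hentry
  simp only [mul_apply, Fin.sum_univ_three_of_ne hij hik hjk] at hentry
  rw [hX0 hki.symm, hY0 hki.symm, hX0 hkj, hY0 hkj, hYij] at hentry
  linear_combination -hentry + X i j * htr'

theorem matrix_sq_system_general
    (X Y : Matrix (Fin 3) (Fin 3) ℝ) (d : Fin 3 → ℝ)
    (htrX : X.trace = 0)
    (hY : Yᵀ = -Y)
    (hd0 : d 0 + d 1 + d 2 = 0) (hd1 : d 0 * d 1 * d 2 ≠ 0)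
    (h1 : X ^ 2 - Y ^ 2 = (Matrix.diagonal d) ^ 2)
    (h2 : X * Y + Y * X = 0) :
    Y = 0 ∧ (X = Matrix.diagonal d ∨ X = -(Matrix.diagonal d)) := by
  have hd (k : Fin 3) : d k ≠ 0 :=
    Finset.prod_ne_zero_iff.1 (by rwa [Fin.prod_univ_three] : ∏ k, d k ≠ 0) k (Finset.mem_univ k)
  have hYdiag (i : Fin 3) : Y i i = 0 := by
    have hii := congrFun (congrFun hY i) i
    rw [transpose_apply, Matrix.neg_apply] at hii
    linarith
  have hoff {i j : Fin 3} (hij : i ≠ j) : X i j = 0 ∧ Y i j = 0 := by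
    obtain ⟨k, hik, hjk⟩ : ∃ k, i ≠ k ∧ j ≠ k := by revert i j; decide
    exact fin_three_apply_eq_zero_of_sq_sub_sq_eq_diagonal_sq htrX hYdiag
      (by rwa [Fin.sum_univ_three]) h1 h2 hij hik hjk (hd k)
  have hY0 : Y = 0 := by
    ext i j
    obtain rfl | hij := eq_or_ne i j
    exacts [hYdiag i, (hoff hij).2]
  have hXdiag : diagonal X.diag = X :=
    (isDiag_iff_diagonal_diag X).1 fun i j hij => (hoff hij).1
  have hsq (i : Fin 3) : X.diag i ^ 2 = d i ^ 2 := by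
    have hii := congrFun (congrFun h1 i) i
    rw [hY0, ← hXdiag] at hii
    simpa [diagonal_pow] using hii
  refine ⟨hY0, ?_⟩
  rw [← hXdiag, diagonal_neg]
  exact (fin_three_eq_or_eq_neg_of_sq_eq_sq (by rwa [trace_fin_three] at htrX) hd0
    (mul_ne_zero (hd 0) (hd 1)) hsq).imp (congrArg diagonal) (congrArg diagonal)

/-- If `X` is a symmetric trace-free real 3×3 matrix, `Y` is skew-symmetric,
`D = diag(d₁,d₂,d₃)` is an invertible diagonal trace-free matrix, and
`X² − Y² = D²` and `XY + YX = 0`, then `Y = 0` and `X = D` or `X = −D`. -/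
theorem matrix_sq_system
    (X Y : Matrix (Fin 3) (Fin 3) ℝ) (d : Fin 3 → ℝ)
    (hX : X.IsSymm) (htrX : X.trace = 0)
    (hY : Yᵀ = -Y)
    (hd0 : d 0 + d 1 + d 2 = 0) (hd1 : d 0 * d 1 * d 2 ≠ 0)
    (h1 : X ^ 2 - Y ^ 2 = (Matrix.diagonal d) ^ 2)
    (h2 : X * Y + Y * X = 0) :
    Y = 0 ∧ (X = Matrix.diagonal d ∨ X = -(Matrix.diagonal d)) :=
  matrix_sq_system_general X Y d htrX hY hd0 hd1 h1 h2
end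

section
/- Let λ ∈ R and let α_0, σ^1, ..., σ^k be primitive (1,1)-forms on R^6 with the standard SU(3)-structure, and ε_1, ..., ε_k nonzero reals, all negative. If α_0 ∧ α_0 − 4λ^2 ω ∧ ω = Σ_r ε_r σ^r ∧ σ^r, then λ = 0 and α_0 = 0. -/
noncomputable section

open Finset

/-- Coefficient arrays of `k`-forms on `ℝ⁶` (components indexed by `k`-tuples of indices). -/
abbrev Form (k : ℕ) : Type := (Fin k → Fin 6) → ℝ

/-- The sign of a self-map of `Fin n`: the sign of the permutation if it is bijective,
and `0` otherwise (a Levi-Civita symbol). -/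
def eps {n : ℕ} (f : Fin n → Fin n) : ℝ :=
  if h : Function.Bijective f then ((Equiv.Perm.sign (Equiv.ofBijective f h) : ℤ) : ℝ) else 0

/-- A coefficient array is alternating (i.e. is an honest `k`-form). -/
def IsAlt {k : ℕ} (α : Form k) : Prop :=
  (∀ f : Fin k → Fin 6, ¬ Function.Injective f → α f = 0) ∧
  ∀ (f : Fin k → Fin 6) (σ : Equiv.Perm (Fin k)),
    α (f ∘ σ) = ((Equiv.Perm.sign σ : ℤ) : ℝ) * α f

/-- Wedge product of forms, in components. -/
def wedge {p q : ℕ} (α : Form p) (β : Form q) : Form (p + q) := fun f =>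
  ((p.factorial : ℝ) * (q.factorial : ℝ))⁻¹ *
    ∑ σ : Equiv.Perm (Fin (p + q)),
      ((Equiv.Perm.sign σ : ℤ) : ℝ)
        * α (fun i => f (σ (Fin.castAdd q i)))
        * β (fun j => f (σ (Fin.natAdd p j)))

/-- The Hodge star operator on `k`-forms on `ℝ⁶`, for the standard metric and
orientation, in components. -/
def hstar {k : ℕ} (h : k + (6 - k) = 6) (α : Form k) : Form (6 - k) := fun g =>
  ((k.factorial : ℝ))⁻¹ *
    ∑ f : Fin k → Fin 6, α f * eps (fun m => Fin.append f g (Fin.cast h.symm m))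

/-- The squared norm of a `k`-form, for the standard metric. -/
def normSq {k : ℕ} (α : Form k) : ℝ :=
  ((k.factorial : ℝ))⁻¹ * ∑ f : Fin k → Fin 6, (α f) ^ 2

/-- The standard dual basis covectors `e^1, …, e^6` (zero-indexed). -/
def e (i : Fin 6) : Form 1 := fun f => if f 0 = i then 1 else 0

/-- The standard Kähler form `ω = e^{12} + e^{34} + e^{56}`. -/
def ω : Form 2 := wedge (e 0) (e 1) + wedge (e 2) (e 3) + wedge (e 4) (e 5)

/-! ### Auxiliary lemmas -/

lemma eps_perm {n : ℕ} (e : Equiv.Perm (Fin n)) : eps ⇑e = ((Equiv.Perm.sign e : ℤ) : ℝ) := by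
  have h : Function.Bijective ⇑e := e.bijective
  rw [eps, dif_pos h, show Equiv.ofBijective ⇑e h = e from Equiv.ext fun x => rfl]

lemma eps_perm' {n : ℕ} (v w : Fin n → Fin n) (h1 : Function.LeftInverse w v)
    (h2 : Function.RightInverse w v) :
    eps v = ((Equiv.Perm.sign (Equiv.mk v w h1 h2) : ℤ) : ℝ) :=
  eps_perm (Equiv.mk v w h1 h2)

lemma eps_zero' {n : ℕ} (f : Fin n → Fin n) (h : ¬ Function.Bijective f) : eps f = 0 :=
  dif_neg h

lemma two_eta (f : Fin 2 → Fin 6) : f = ![f 0, f 1] := by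
  funext i; fin_cases i <;> rfl

lemma alt_swap {σ : Form 2} (h : IsAlt σ) (x y : Fin 6) : σ ![y, x] = -σ ![x, y] := by
  have h2 := h.2 ![x, y] (Equiv.swap 0 1)
  have hcomp : ![x, y] ∘ ⇑(Equiv.swap (0 : Fin 2) 1) = ![y, x] := by
    funext i; fin_cases i <;> rfl
  rw [hcomp, Equiv.Perm.sign_swap (by decide)] at h2
  rw [h2]; norm_num

lemma alt_diag {σ : Form 2} (h : IsAlt σ) (x : Fin 6) : σ ![x, x] = 0 :=
  h.1 _ (fun hinj => absurd (hinj (show ![x, x] 0 = ![x, x] 1 from rfl)) (by decide))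

/-! ### Permutation sum expansions -/

lemma psum {n : ℕ} (F : Equiv.Perm (Fin (n+1)) → ℝ) :
    ∑ τ, F τ = ∑ p : Fin (n+1), ∑ e : Equiv.Perm (Fin n),
      F (Equiv.Perm.decomposeFin.symm (p, e)) := by
  rw [← Equiv.sum_comp (Equiv.Perm.decomposeFin).symm F, Fintype.sum_prod_type]

lemma psum4 (F : Equiv.Perm (Fin 4) → ℝ) :
    ∑ τ, F τ = ∑ p : Fin 4, ∑ e : Equiv.Perm (Fin 3),
      F (Equiv.Perm.decomposeFin.symm (p, e)) := psum F

lemma psum3 (F : Equiv.Perm (Fin 3) → ℝ) :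
    ∑ τ, F τ = ∑ p : Fin 3, ∑ e : Equiv.Perm (Fin 2),
      F (Equiv.Perm.decomposeFin.symm (p, e)) := psum F

lemma psum2 (F : Equiv.Perm (Fin 2) → ℝ) :
    ∑ τ, F τ = ∑ p : Fin 2, ∑ e : Equiv.Perm (Fin 1),
      F (Equiv.Perm.decomposeFin.symm (p, e)) := psum F

lemma perm4_expand (S : Fin 4 → Fin 4 → Fin 4 → Fin 4 → ℝ) :
  ∑ τ : Equiv.Perm (Fin 4), ((Equiv.Perm.sign τ : ℤ) : ℝ) * S (τ 0) (τ 1) (τ 2) (τ 3) =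
      (S 0 1 2 3 - S 0 1 3 2 - S 0 2 1 3 + S 0 2 3 1 + S 0 3 1 2 - S 0 3 2 1)
    - (S 1 0 2 3 - S 1 0 3 2 - S 1 2 0 3 + S 1 2 3 0 + S 1 3 0 2 - S 1 3 2 0)
    + (S 2 0 1 3 - S 2 0 3 1 - S 2 1 0 3 + S 2 1 3 0 + S 2 3 0 1 - S 2 3 1 0)
    - (S 3 0 1 2 - S 3 0 2 1 - S 3 1 0 2 + S 3 1 2 0 + S 3 2 0 1 - S 3 2 1 0) := by
  simp only [psum4, psum3, psum2, Fintype.sum_unique]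
  simp only [Fin.sum_univ_four, Fin.sum_univ_three, Fin.sum_univ_two]
  simp only [show (1:Fin 4) = Fin.succ 0 from rfl, show (2:Fin 4) = Fin.succ 1 from rfl,
    show (3:Fin 4) = Fin.succ 2 from rfl,
    show (1:Fin 3) = Fin.succ 0 from rfl, show (2:Fin 3) = Fin.succ 1 from rfl,
    show (1:Fin 2) = Fin.succ 0 from rfl]
  simp only [Equiv.Perm.decomposeFin.symm_sign, Equiv.Perm.decomposeFin_symm_apply_zero,
    Equiv.Perm.decomposeFin_symm_apply_succ, Equiv.Perm.sign_one, Equiv.Perm.one_apply]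
  norm_num [Equiv.swap_apply_def, Fin.ext_iff, Fin.val_succ]
  ring

lemma perm2_expand (S : Fin 2 → Fin 2 → ℝ) :
  ∑ τ : Equiv.Perm (Fin 2), ((Equiv.Perm.sign τ : ℤ) : ℝ) * S (τ 0) (τ 1) = S 0 1 - S 1 0 := by
  simp only [psum2, Fintype.sum_unique]
  simp only [Fin.sum_univ_two]
  simp only [show (1:Fin 2) = Fin.succ 0 from rfl]
  simp only [Equiv.Perm.decomposeFin.symm_sign, Equiv.Perm.decomposeFin_symm_apply_zero,
    Equiv.Perm.decomposeFin_symm_apply_succ, Equiv.Perm.sign_one, Equiv.Perm.one_apply]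
  norm_num [Equiv.swap_apply_def, Fin.ext_iff, Fin.val_succ]
  ring

/-! ### Wedge product evaluation -/

lemma wedge22_expand (α β : Form 2) (g : Fin (2+2) → Fin 6) :
    wedge α β g = (4:ℝ)⁻¹ *
      (  (α ![g 0, g 1] * β ![g 2, g 3] - α ![g 0, g 1] * β ![g 3, g 2]
        - α ![g 0, g 2] * β ![g 1, g 3] + α ![g 0, g 2] * β ![g 3, g 1]
        + α ![g 0, g 3] * β ![g 1, g 2] - α ![g 0, g 3] * β ![g 2, g 1])
      - (α ![g 1, g 0] * β ![g 2, g 3] - α ![g 1, g 0] * β ![g 3, g 2]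
        - α ![g 1, g 2] * β ![g 0, g 3] + α ![g 1, g 2] * β ![g 3, g 0]
        + α ![g 1, g 3] * β ![g 0, g 2] - α ![g 1, g 3] * β ![g 2, g 0])
      + (α ![g 2, g 0] * β ![g 1, g 3] - α ![g 2, g 0] * β ![g 3, g 1]
        - α ![g 2, g 1] * β ![g 0, g 3] + α ![g 2, g 1] * β ![g 3, g 0]
        + α ![g 2, g 3] * β ![g 0, g 1] - α ![g 2, g 3] * β ![g 1, g 0])
      - (α ![g 3, g 0] * β ![g 1, g 2] - α ![g 3, g 0] * β ![g 2, g 1]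
        - α ![g 3, g 1] * β ![g 0, g 2] + α ![g 3, g 1] * β ![g 2, g 0]
        + α ![g 3, g 2] * β ![g 0, g 1] - α ![g 3, g 2] * β ![g 1, g 0]) ) := by
  have h : ∀ τ : Equiv.Perm (Fin (2+2)),
      ((Equiv.Perm.sign τ : ℤ) : ℝ) * α (fun i => g (τ (Fin.castAdd 2 i)))
        * β (fun j => g (τ (Fin.natAdd 2 j)))
      = ((Equiv.Perm.sign τ : ℤ) : ℝ) *
          (α ![g (τ 0), g (τ 1)] * β ![g (τ 2), g (τ 3)]) := by
    intro τ
    have h1 : (fun i : Fin 2 => g (τ (Fin.castAdd 2 i))) = ![g (τ 0), g (τ 1)] := by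
      funext i; fin_cases i <;> rfl
    have h2 : (fun j : Fin 2 => g (τ (Fin.natAdd 2 j))) = ![g (τ 2), g (τ 3)] := by
      funext j; fin_cases j <;> rfl
    rw [h1, h2, mul_assoc]
  unfold wedge
  rw [Finset.sum_congr rfl (fun τ _ => h τ),
    perm4_expand (fun a b c d => α ![g a, g b] * β ![g c, g d])]
  norm_num [Nat.factorial]

lemma wedge22_at (α β : Form 2) (ha : ∀ x y, α ![y,x] = -α ![x,y])
    (hb : ∀ x y, β ![y,x] = -β ![x,y]) (p q r s : Fin 6) :
    wedge α β ![p,q,r,s] =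
        α ![p,q] * β ![r,s] - α ![p,r] * β ![q,s] + α ![p,s] * β ![q,r]
      + α ![r,s] * β ![p,q] - α ![q,s] * β ![p,r] + α ![q,r] * β ![p,s] := by
  rw [wedge22_expand α β ![p,q,r,s]]
  rw [show (![p,q,r,s] : Fin (2+2) → Fin 6) 0 = p from rfl,
      show (![p,q,r,s] : Fin (2+2) → Fin 6) 1 = q from rfl,
      show (![p,q,r,s] : Fin (2+2) → Fin 6) 2 = r from rfl,
      show (![p,q,r,s] : Fin (2+2) → Fin 6) 3 = s from rfl]
  rw [ha p q, ha p r, ha q r, ha p s, ha q s, ha r s,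
      hb p q, hb p r, hb q r, hb p s, hb q s, hb r s]
  ring

lemma one_eta (f : Fin 1 → Fin 6) : f = ![f 0] := by
  funext i; fin_cases i <;> rfl

lemma wedge11_at (α β : Form 1) (i j : Fin 6) :
    wedge α β ![i,j] = α ![i] * β ![j] - α ![j] * β ![i] := by
  have h : ∀ τ : Equiv.Perm (Fin (1+1)),
      ((Equiv.Perm.sign τ : ℤ) : ℝ) * α (fun k => ![i,j] (τ (Fin.castAdd 1 k)))
        * β (fun k => ![i,j] (τ (Fin.natAdd 1 k)))
      = ((Equiv.Perm.sign τ : ℤ) : ℝ) *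
          (α ![ (![i,j] : Fin 2 → Fin 6) (τ 0) ] * β ![ (![i,j] : Fin 2 → Fin 6) (τ 1) ]) := by
    intro τ
    have h1 : (fun k : Fin 1 => ![i,j] (τ (Fin.castAdd 1 k))) = ![ (![i,j] : Fin 2 → Fin 6) (τ 0) ] := by
      funext k; fin_cases k <;> rfl
    have h2 : (fun k : Fin 1 => ![i,j] (τ (Fin.natAdd 1 k))) = ![ (![i,j] : Fin 2 → Fin 6) (τ 1) ] := by
      funext k; fin_cases k <;> rfl
    rw [h1, h2, mul_assoc]
  unfold wedge
  rw [Finset.sum_congr rfl (fun τ _ => h τ),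
    perm2_expand (fun a b => α ![ (![i,j] : Fin 2 → Fin 6) a ] * β ![ (![i,j] : Fin 2 → Fin 6) b ])]
  norm_num [Nat.factorial]

lemma omega_apply (i j : Fin 6) : ω ![i,j] =
    ((if i = 0 then (1:ℝ) else 0) * (if j = 1 then 1 else 0)
      - (if j = 0 then (1:ℝ) else 0) * (if i = 1 then 1 else 0))
  + ((if i = 2 then (1:ℝ) else 0) * (if j = 3 then 1 else 0)
      - (if j = 2 then (1:ℝ) else 0) * (if i = 3 then 1 else 0))
  + ((if i = 4 then (1:ℝ) else 0) * (if j = 5 then 1 else 0)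
      - (if j = 4 then (1:ℝ) else 0) * (if i = 5 then 1 else 0)) := by
  show wedge (e 0) (e 1) ![i,j] + wedge (e 2) (e 3) ![i,j] + wedge (e 4) (e 5) ![i,j] = _
  rw [wedge11_at, wedge11_at, wedge11_at]
  simp only [e, Matrix.cons_val_zero]
  rfl

lemma omega_swap : ∀ x y : Fin 6, ω ![y,x] = -ω ![x,y] := by
  intro x y; rw [omega_apply, omega_apply]; ring

lemma w01 : ω ![0,1] = 1 := by rw [omega_apply]; simp
lemma w23 : ω ![2,3] = 1 := by rw [omega_apply]; simp
lemma w45 : ω ![4,5] = 1 := by rw [omega_apply]; simp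
lemma w02 : ω ![0,2] = 0 := by rw [omega_apply]; simp
lemma w03 : ω ![0,3] = 0 := by rw [omega_apply]; simp
lemma w04 : ω ![0,4] = 0 := by rw [omega_apply]; simp
lemma w05 : ω ![0,5] = 0 := by rw [omega_apply]; simp
lemma w12 : ω ![1,2] = 0 := by rw [omega_apply]; simp
lemma w13 : ω ![1,3] = 0 := by rw [omega_apply]; simp
lemma w14 : ω ![1,4] = 0 := by rw [omega_apply]; simp
lemma w15 : ω ![1,5] = 0 := by rw [omega_apply]; simp
lemma w24 : ω ![2,4] = 0 := by rw [omega_apply]; simp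
lemma w25 : ω ![2,5] = 0 := by rw [omega_apply]; simp
lemma w34 : ω ![3,4] = 0 := by rw [omega_apply]; simp
lemma w35 : ω ![3,5] = 0 := by rw [omega_apply]; simp
lemma epsA1 : eps (![0,1,2,3,4,5] : Fin 6 → Fin 6) = 1 := by
  rw [eps_perm' ![0,1,2,3,4,5] ![0,1,2,3,4,5] (by decide) (by decide)]
  rw [show Equiv.Perm.sign (Equiv.mk (![0,1,2,3,4,5] : Fin 6 → Fin 6) ![0,1,2,3,4,5] (by decide) (by decide)) = 1 from by decide]
  norm_num

lemma epsA2 : eps (![1,0,2,3,4,5] : Fin 6 → Fin 6) = -1 := by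
  rw [eps_perm' ![1,0,2,3,4,5] ![1,0,2,3,4,5] (by decide) (by decide)]
  rw [show Equiv.Perm.sign (Equiv.mk (![1,0,2,3,4,5] : Fin 6 → Fin 6) ![1,0,2,3,4,5] (by decide) (by decide)) = -1 from by decide]
  norm_num

lemma epsB1 : eps (![0,2,1,3,4,5] : Fin 6 → Fin 6) = -1 := by
  rw [eps_perm' ![0,2,1,3,4,5] ![0,2,1,3,4,5] (by decide) (by decide)]
  rw [show Equiv.Perm.sign (Equiv.mk (![0,2,1,3,4,5] : Fin 6 → Fin 6) ![0,2,1,3,4,5] (by decide) (by decide)) = -1 from by decide]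
  norm_num

lemma epsB2 : eps (![2,0,1,3,4,5] : Fin 6 → Fin 6) = 1 := by
  rw [eps_perm' ![2,0,1,3,4,5] ![1,2,0,3,4,5] (by decide) (by decide)]
  rw [show Equiv.Perm.sign (Equiv.mk (![2,0,1,3,4,5] : Fin 6 → Fin 6) ![1,2,0,3,4,5] (by decide) (by decide)) = 1 from by decide]
  norm_num

lemma epsC1 : eps (![0,3,1,2,4,5] : Fin 6 → Fin 6) = 1 := by
  rw [eps_perm' ![0,3,1,2,4,5] ![0,2,3,1,4,5] (by decide) (by decide)]
  rw [show Equiv.Perm.sign (Equiv.mk (![0,3,1,2,4,5] : Fin 6 → Fin 6) ![0,2,3,1,4,5] (by decide) (by decide)) = 1 from by decide]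
  norm_num

lemma epsC2 : eps (![3,0,1,2,4,5] : Fin 6 → Fin 6) = -1 := by
  rw [eps_perm' ![3,0,1,2,4,5] ![1,2,3,0,4,5] (by decide) (by decide)]
  rw [show Equiv.Perm.sign (Equiv.mk (![3,0,1,2,4,5] : Fin 6 → Fin 6) ![1,2,3,0,4,5] (by decide) (by decide)) = -1 from by decide]
  norm_num

lemma epsD1 : eps (![0,4,1,2,3,5] : Fin 6 → Fin 6) = -1 := by
  rw [eps_perm' ![0,4,1,2,3,5] ![0,2,3,4,1,5] (by decide) (by decide)]
  rw [show Equiv.Perm.sign (Equiv.mk (![0,4,1,2,3,5] : Fin 6 → Fin 6) ![0,2,3,4,1,5] (by decide) (by decide)) = -1 from by decide]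
  norm_num

lemma epsD2 : eps (![4,0,1,2,3,5] : Fin 6 → Fin 6) = 1 := by
  rw [eps_perm' ![4,0,1,2,3,5] ![1,2,3,4,0,5] (by decide) (by decide)]
  rw [show Equiv.Perm.sign (Equiv.mk (![4,0,1,2,3,5] : Fin 6 → Fin 6) ![1,2,3,4,0,5] (by decide) (by decide)) = 1 from by decide]
  norm_num

lemma epsE1 : eps (![0,5,1,2,3,4] : Fin 6 → Fin 6) = 1 := by
  rw [eps_perm' ![0,5,1,2,3,4] ![0,2,3,4,5,1] (by decide) (by decide)]
  rw [show Equiv.Perm.sign (Equiv.mk (![0,5,1,2,3,4] : Fin 6 → Fin 6) ![0,2,3,4,5,1] (by decide) (by decide)) = 1 from by decide]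
  norm_num

lemma epsE2 : eps (![5,0,1,2,3,4] : Fin 6 → Fin 6) = -1 := by
  rw [eps_perm' ![5,0,1,2,3,4] ![1,2,3,4,5,0] (by decide) (by decide)]
  rw [show Equiv.Perm.sign (Equiv.mk (![5,0,1,2,3,4] : Fin 6 → Fin 6) ![1,2,3,4,5,0] (by decide) (by decide)) = -1 from by decide]
  norm_num

lemma epsF1 : eps (![2,4,0,1,3,5] : Fin 6 → Fin 6) = -1 := by
  rw [eps_perm' ![2,4,0,1,3,5] ![2,3,0,4,1,5] (by decide) (by decide)]
  rw [show Equiv.Perm.sign (Equiv.mk (![2,4,0,1,3,5] : Fin 6 → Fin 6) ![2,3,0,4,1,5] (by decide) (by decide)) = -1 from by decide]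
  norm_num

lemma epsF2 : eps (![4,2,0,1,3,5] : Fin 6 → Fin 6) = 1 := by
  rw [eps_perm' ![4,2,0,1,3,5] ![2,3,1,4,0,5] (by decide) (by decide)]
  rw [show Equiv.Perm.sign (Equiv.mk (![4,2,0,1,3,5] : Fin 6 → Fin 6) ![2,3,1,4,0,5] (by decide) (by decide)) = 1 from by decide]
  norm_num

lemma epsG1 : eps (![2,5,0,1,3,4] : Fin 6 → Fin 6) = 1 := by
  rw [eps_perm' ![2,5,0,1,3,4] ![2,3,0,4,5,1] (by decide) (by decide)]
  rw [show Equiv.Perm.sign (Equiv.mk (![2,5,0,1,3,4] : Fin 6 → Fin 6) ![2,3,0,4,5,1] (by decide) (by decide)) = 1 from by decide]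
  norm_num

lemma epsG2 : eps (![5,2,0,1,3,4] : Fin 6 → Fin 6) = -1 := by
  rw [eps_perm' ![5,2,0,1,3,4] ![2,3,1,4,5,0] (by decide) (by decide)]
  rw [show Equiv.Perm.sign (Equiv.mk (![5,2,0,1,3,4] : Fin 6 → Fin 6) ![2,3,1,4,5,0] (by decide) (by decide)) = -1 from by decide]
  norm_num

/-! ### Hodge star evaluation -/

lemma hstar_eval (σ : Form 2) (x y p q r s : Fin 6)
    (hbij : Function.Bijective ![x, y, p, q, r, s]) :
    hstar rfl σ ![p,q,r,s] = (2:ℝ)⁻¹ *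
      (σ ![x,y] * eps ![x, y, p, q, r, s] + σ ![y,x] * eps ![y, x, p, q, r, s]) := by
  have W := hbij.injective
  have key : ∀ i j : Fin 6, i ≠ j → ![x,y,p,q,r,s] i ≠ ![x,y,p,q,r,s] j :=
    fun i j hij h => hij (W h)
  have hsum : ∀ f : Fin 2 → Fin 6,
      σ f * eps (fun m => Fin.append f ![p,q,r,s] (Fin.cast (Eq.symm (rfl : 2 + (6-2) = 6)) m))
        = σ ![f 0, f 1] * eps ![f 0, f 1, p, q, r, s] := by
    intro f
    have happ : (fun m : Fin 6 =>
        Fin.append f ![p,q,r,s] (Fin.cast (Eq.symm (rfl : 2 + (6-2) = 6)) m))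
          = ![f 0, f 1, p, q, r, s] := by
      funext m; fin_cases m <;> rfl
    rw [happ, ← two_eta f]
  unfold hstar
  rw [Finset.sum_congr rfl (fun f _ => hsum f)]
  rw [Fintype.sum_eq_add (![x,y] : Fin 2 → Fin 6) (![y,x] : Fin 2 → Fin 6)
    (fun h => key 0 1 (by decide) (congrFun h 0))
    (by
      rintro c ⟨h1, h2⟩
      have hz : eps ![c 0, c 1, p, q, r, s] = 0 := by
        apply eps_zero'
        intro hb
        have hc01 : c 0 ≠ c 1 := fun h =>
          absurd (hb.injective (show ![c 0, c 1, p, q, r, s] 0 = ![c 0, c 1, p, q, r, s] 1 from h))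
            (by decide)
        obtain ⟨m, hm⟩ := hb.surjective x
        have hcx : c 0 = x ∨ c 1 = x := by
          fin_cases m
          · exact Or.inl hm
          · exact Or.inr hm
          · exact absurd hm.symm (key 0 2 (by decide))
          · exact absurd hm.symm (key 0 3 (by decide))
          · exact absurd hm.symm (key 0 4 (by decide))
          · exact absurd hm.symm (key 0 5 (by decide))
        obtain ⟨m', hm'⟩ := hb.surjective y
        have hcy : c 0 = y ∨ c 1 = y := by
          fin_cases m'
          · exact Or.inl hm'
          · exact Or.inr hm'
          · exact absurd hm'.symm (key 1 2 (by decide))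
          · exact absurd hm'.symm (key 1 3 (by decide))
          · exact absurd hm'.symm (key 1 4 (by decide))
          · exact absurd hm'.symm (key 1 5 (by decide))
        rcases hcx with h0 | h1' <;> rcases hcy with k0 | k1
        · exact key 0 1 (by decide) (h0.symm.trans k0)
        · exact h1 (by rw [two_eta c, h0, k1])
        · exact h2 (by rw [two_eta c, h1', k0])
        · exact key 0 1 (by decide) (h1'.symm.trans k1)
      rw [hz, mul_zero])]
  norm_num [Nat.factorial]

/-! ### Relations satisfied by a primitive (1,1)-form -/

lemma prim_rels (τ : Form 2) (hτ : IsAlt τ) (hprim : wedge τ ω = - hstar rfl τ) :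
    τ ![0,1] + τ ![2,3] + τ ![4,5] = 0 ∧
    τ ![1,3] = τ ![0,2] ∧ τ ![1,2] = -τ ![0,3] ∧
    τ ![1,5] = τ ![0,4] ∧ τ ![1,4] = -τ ![0,5] ∧
    τ ![3,5] = τ ![2,4] ∧ τ ![3,4] = -τ ![2,5] := by
  have ha := alt_swap hτ
  have h1 := congrFun hprim (![2,3,4,5] : Fin (2+2) → Fin 6)
  rw [wedge22_at τ ω ha omega_swap 2 3 4 5, Pi.neg_apply,
    hstar_eval τ 0 1 2 3 4 5 (by decide), epsA1, epsA2,
    w45, w35, w34, w23, w24, w25, ha 0 1] at h1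
  have h2 := congrFun hprim (![1,3,4,5] : Fin (2+2) → Fin 6)
  rw [wedge22_at τ ω ha omega_swap 1 3 4 5, Pi.neg_apply,
    hstar_eval τ 0 2 1 3 4 5 (by decide), epsB1, epsB2,
    w45, w35, w34, w13, w14, w15, ha 0 2] at h2
  have h3 := congrFun hprim (![1,2,4,5] : Fin (2+2) → Fin 6)
  rw [wedge22_at τ ω ha omega_swap 1 2 4 5, Pi.neg_apply,
    hstar_eval τ 0 3 1 2 4 5 (by decide), epsC1, epsC2,
    w45, w25, w24, w12, w14, w15, ha 0 3] at h3
  have h4 := congrFun hprim (![1,2,3,5] : Fin (2+2) → Fin 6)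
  rw [wedge22_at τ ω ha omega_swap 1 2 3 5, Pi.neg_apply,
    hstar_eval τ 0 4 1 2 3 5 (by decide), epsD1, epsD2,
    w35, w25, w23, w12, w13, w15, ha 0 4] at h4
  have h5 := congrFun hprim (![1,2,3,4] : Fin (2+2) → Fin 6)
  rw [wedge22_at τ ω ha omega_swap 1 2 3 4, Pi.neg_apply,
    hstar_eval τ 0 5 1 2 3 4 (by decide), epsE1, epsE2,
    w34, w24, w23, w12, w13, w14, ha 0 5] at h5
  have h6 := congrFun hprim (![0,1,3,5] : Fin (2+2) → Fin 6)
  rw [wedge22_at τ ω ha omega_swap 0 1 3 5, Pi.neg_apply,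
    hstar_eval τ 2 4 0 1 3 5 (by decide), epsF1, epsF2,
    w35, w15, w13, w01, w03, w05, ha 2 4] at h6
  have h7 := congrFun hprim (![0,1,3,4] : Fin (2+2) → Fin 6)
  rw [wedge22_at τ ω ha omega_swap 0 1 3 4, Pi.neg_apply,
    hstar_eval τ 2 5 0 1 3 4 (by decide), epsG1, epsG2,
    w34, w14, w13, w01, w03, w04, ha 2 5] at h7
  refine ⟨by linarith, by linarith, by linarith, by linarith, by linarith,
    by linarith, by linarith⟩

/-! ### The key quadratic identity -/

lemma quad (τ : Form 2) (hτ : IsAlt τ) (hprim : wedge τ ω = - hstar rfl τ) :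
    wedge τ τ ![0,1,2,3] + wedge τ τ ![0,1,4,5] + wedge τ τ ![2,3,4,5]
      = -(2*(τ ![0,1])^2 + 2*(τ ![2,3])^2 + 2*(τ ![0,1]*τ ![2,3]))
        - 2*((τ ![0,2])^2 + (τ ![0,3])^2 + (τ ![0,4])^2 + (τ ![0,5])^2
            + (τ ![2,4])^2 + (τ ![2,5])^2) := by
  obtain ⟨r1, r2, r3, r4, r5, r6, r7⟩ := prim_rels τ hτ hprim
  have ha := alt_swap hτ
  have r45 : τ ![4,5] = -τ ![0,1] - τ ![2,3] := by linarith
  rw [wedge22_at τ τ ha ha 0 1 2 3, wedge22_at τ τ ha ha 0 1 4 5,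
    wedge22_at τ τ ha ha 2 3 4 5, r2, r3, r4, r5, r6, r7, r45]
  ring

lemma hw1 : wedge ω ω ![0,1,2,3] = 2 := by
  rw [wedge22_at ω ω omega_swap omega_swap 0 1 2 3, w01, w23, w02, w03, w12, w13]; ring

lemma hw2 : wedge ω ω ![0,1,4,5] = 2 := by
  rw [wedge22_at ω ω omega_swap omega_swap 0 1 4 5, w01, w45, w04, w05, w14, w15]; ring

lemma hw3 : wedge ω ω ![2,3,4,5] = 2 := by
  rw [wedge22_at ω ω omega_swap omega_swap 2 3 4 5, w23, w45, w24, w25, w34, w35]; ring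

lemma zeros_of_sum_nonpos (u v a b c d f g lam : ℝ)
    (h : 2*u^2 + 2*v^2 + 2*(u*v) + 2*(a^2+b^2+c^2+d^2+f^2+g^2) + 24*lam^2 ≤ 0) :
    lam = 0 ∧ u = 0 ∧ v = 0 ∧ a = 0 ∧ b = 0 ∧ c = 0 ∧ d = 0 ∧ f = 0 ∧ g = 0 := by
  have hz : ∀ x : ℝ, x^2 ≤ 0 → x = 0 := fun x hx =>
    pow_eq_zero_iff (by norm_num : (2:ℕ) ≠ 0) |>.mp (le_antisymm hx (sq_nonneg x))
  have e : 2*u^2 + 2*v^2 + 2*(u*v) = u^2 + v^2 + (u+v)^2 := by ring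
  have s0 := sq_nonneg (u+v)
  have s1 := sq_nonneg u
  have s2 := sq_nonneg v
  have s3 := sq_nonneg a
  have s4 := sq_nonneg b
  have s5 := sq_nonneg c
  have s6 := sq_nonneg d
  have s7 := sq_nonneg f
  have s8 := sq_nonneg g
  have s9 := sq_nonneg lam
  exact ⟨hz lam (by linarith), hz u (by linarith), hz v (by linarith), hz a (by linarith),
    hz b (by linarith), hz c (by linarith), hz d (by linarith), hz f (by linarith),
    hz g (by linarith)⟩

/-- If `α₀, σ¹, …, σᵏ` are primitive `(1,1)`-forms on `ℝ⁶` with its standard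
`SU(3)`-structure, all `ε_r` are negative, and
`α₀ ∧ α₀ − 4λ² ω ∧ ω = Σ_r ε_r σ^r ∧ σ^r`, then `λ = 0` and `α₀ = 0`. -/
theorem no_solution_all_negative (k : ℕ) (lam : ℝ)
    (α₀ : Form 2) (σ : Fin k → Form 2) (ε : Fin k → ℝ)
    (hα : IsAlt α₀) (hαprim : wedge α₀ ω = - hstar rfl α₀)
    (hσ : ∀ r, IsAlt (σ r)) (hσprim : ∀ r, wedge (σ r) ω = - hstar rfl (σ r))
    (hε : ∀ r, ε r < 0)
    (heq : wedge α₀ α₀ - (4 * lam ^ 2) • wedge ω ω = ∑ r, ε r • wedge (σ r) (σ r)) :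
    lam = 0 ∧ α₀ = 0 := by
  classical
  have hev : ∀ g : Fin (2+2) → Fin 6,
      wedge α₀ α₀ g - (4 * lam ^ 2) * wedge ω ω g = ∑ r, ε r * wedge (σ r) (σ r) g := by
    intro g
    have h := congrFun heq g
    simpa [Pi.sub_apply, Pi.smul_apply, smul_eq_mul, Finset.sum_apply] using h
  have E1 := hev ![0,1,2,3]
  have E2 := hev ![0,1,4,5]
  have E3 := hev ![2,3,4,5]
  rw [hw1] at E1; rw [hw2] at E2; rw [hw3] at E3
  have hkey : (wedge α₀ α₀ ![0,1,2,3] + wedge α₀ α₀ ![0,1,4,5] + wedge α₀ α₀ ![2,3,4,5])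
      - 4 * lam ^ 2 * 6
      = ∑ r, ε r * (wedge (σ r) (σ r) ![0,1,2,3] + wedge (σ r) (σ r) ![0,1,4,5]
          + wedge (σ r) (σ r) ![2,3,4,5]) := by
    have hsplit : ∑ r, ε r * (wedge (σ r) (σ r) ![0,1,2,3] + wedge (σ r) (σ r) ![0,1,4,5]
          + wedge (σ r) (σ r) ![2,3,4,5])
        = ∑ r, ε r * wedge (σ r) (σ r) ![0,1,2,3]
        + ∑ r, ε r * wedge (σ r) (σ r) ![0,1,4,5]
        + ∑ r, ε r * wedge (σ r) (σ r) ![2,3,4,5] := by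
      rw [← Finset.sum_add_distrib, ← Finset.sum_add_distrib]
      exact Finset.sum_congr rfl fun r _ => by ring
    rw [hsplit]
    linarith
  have hRHS : 0 ≤ ∑ r, ε r * (wedge (σ r) (σ r) ![0,1,2,3] + wedge (σ r) (σ r) ![0,1,4,5]
      + wedge (σ r) (σ r) ![2,3,4,5]) := by
    apply Finset.sum_nonneg
    intro r _
    have hq := quad (σ r) (hσ r) (hσprim r)
    have hnp : wedge (σ r) (σ r) ![0,1,2,3] + wedge (σ r) (σ r) ![0,1,4,5]
        + wedge (σ r) (σ r) ![2,3,4,5] ≤ 0 := by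
      rw [hq]
      nlinarith [sq_nonneg (σ r ![0,1] + σ r ![2,3]), sq_nonneg (σ r ![0,1]),
        sq_nonneg (σ r ![2,3]), sq_nonneg (σ r ![0,2]), sq_nonneg (σ r ![0,3]),
        sq_nonneg (σ r ![0,4]), sq_nonneg (σ r ![0,5]), sq_nonneg (σ r ![2,4]),
        sq_nonneg (σ r ![2,5])]
    have := mul_nonneg (neg_nonneg.mpr (hε r).le) (neg_nonneg.mpr hnp)
    nlinarith [this]
  have hqa := quad α₀ hα hαprim
  obtain ⟨r1, r2, r3, r4, r5, r6, r7⟩ := prim_rels α₀ hα hαprim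
  have hmain : 2*(α₀ ![0,1])^2 + 2*(α₀ ![2,3])^2 + 2*(α₀ ![0,1]*α₀ ![2,3])
      + 2*((α₀ ![0,2])^2 + (α₀ ![0,3])^2 + (α₀ ![0,4])^2 + (α₀ ![0,5])^2
          + (α₀ ![2,4])^2 + (α₀ ![2,5])^2) + 24 * lam ^ 2 ≤ 0 := by
    linarith [hkey, hRHS, hqa]
  obtain ⟨hlam, z01, z23, z02, z03, z04, z05, z24, z25⟩ :=
    zeros_of_sum_nonpos _ _ _ _ _ _ _ _ _ hmain
  refine ⟨hlam, ?_⟩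
  have z45 : α₀ ![4,5] = 0 := by linarith
  have z13 : α₀ ![1,3] = 0 := by rw [r2]; exact z02
  have z12 : α₀ ![1,2] = 0 := by rw [r3, z03]; ring
  have z15 : α₀ ![1,5] = 0 := by rw [r4]; exact z04
  have z14 : α₀ ![1,4] = 0 := by rw [r5, z05]; ring
  have z35 : α₀ ![3,5] = 0 := by rw [r6]; exact z24
  have z34 : α₀ ![3,4] = 0 := by rw [r7, z25]; ring
  have hrev : ∀ x y : Fin 6, α₀ ![x,y] = 0 → α₀ ![y,x] = 0 := by
    intro x y h; rw [alt_swap hα, h]; ring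
  have hz : ∀ i j : Fin 6, α₀ ![i,j] = 0 := by
    intro i j
    fin_cases i <;> fin_cases j <;>
      first
        | exact alt_diag hα _
        | exact z01 | exact z02 | exact z03 | exact z04 | exact z05
        | exact z12 | exact z13 | exact z14 | exact z15
        | exact z23 | exact z24 | exact z25
        | exact z34 | exact z35 | exact z45
        | exact hrev _ _ z01 | exact hrev _ _ z02 | exact hrev _ _ z03
        | exact hrev _ _ z04 | exact hrev _ _ z05
        | exact hrev _ _ z12 | exact hrev _ _ z13 | exact hrev _ _ z14
        | exact hrev _ _ z15
        | exact hrev _ _ z23 | exact hrev _ _ z24 | exact hrev _ _ z25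
        | exact hrev _ _ z34 | exact hrev _ _ z35 | exact hrev _ _ z45
  funext f
  calc α₀ f = α₀ ![f 0, f 1] := congrArg α₀ (two_eta f)
    _ = 0 := hz (f 0) (f 1)
end
end

section
/- Let v_1, v_2, v_3, w_1, w_2, w_3 be elements of the dual of a 4-dimensional real vector space, ε_1, ε_2 nonzero reals, λ ≠ 0 real, and α_1, α_2, α_3 defined by 2λ·α_3 = ε_1 v_1∧v_2 + ε_2 w_1∧w_2, 2λ·α_2 = ε_1 v_3∧v_1 + ε_2 w_3∧w_1, 2λ·α_1 = ε_1 v_2∧v_3 + ε_2 w_2∧w_3, and suppose v_1∧α_1 + v_2∧α_2 + v_3∧α_3 = 0 and w_1∧α_1 + w_2∧α_2 + w_3∧α_3 = 0; then there are no linearly independent f_0, f_1, f_2, f_3 with α_i = f_0∧f_i for i = 1, 2, 3, since such a system forces λ = 0, a contradiction. -/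
open ExteriorAlgebra

noncomputable section LambdaAux
variable {W : Type*} [AddCommGroup W] [Module ℝ W]

private def lamFam (n : ℕ) (F : W [⋀^Fin n]→ₗ[ℝ] ℝ) : ∀ i : ℕ, W [⋀^Fin i]→ₗ[ℝ] ℝ :=
  Function.update (fun i => (0 : W [⋀^Fin i]→ₗ[ℝ] ℝ)) n F

private theorem lamLift2 (F : W [⋀^Fin 2]→ₗ[ℝ] ℝ) (x y : W) :
    liftAlternating (lamFam 2 F) (ι ℝ x * ι ℝ y) = F ![x, y] := by
  rw [liftAlternating_ι_mul, liftAlternating_ι]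
  show ((lamFam 2 F) 2).curryLeft x ![y] = _
  simp [lamFam]

private theorem lamLift3 (F : W [⋀^Fin 3]→ₗ[ℝ] ℝ) (x y z : W) :
    liftAlternating (lamFam 3 F) (ι ℝ x * (ι ℝ y * ι ℝ z)) = F ![x, y, z] := by
  rw [liftAlternating_ι_mul, liftAlternating_ι_mul, liftAlternating_ι]
  show (((lamFam 3 F) 3).curryLeft x).curryLeft y ![z] = _
  simp [lamFam]

private def lamPhi2 (b : Module.Basis (Fin 4) ℝ W) (c : Fin 2 → Fin 4) : W [⋀^Fin 2]→ₗ[ℝ] ℝ :=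
  (Matrix.detRowAlternating).compLinearMap (LinearMap.pi fun j => b.coord (c j))

private def lamPhi3 (b : Module.Basis (Fin 4) ℝ W) (c : Fin 3 → Fin 4) : W [⋀^Fin 3]→ₗ[ℝ] ℝ :=
  (Matrix.detRowAlternating).compLinearMap (LinearMap.pi fun j => b.coord (c j))

private theorem lamPhi2_apply (b : Module.Basis (Fin 4) ℝ W) (c : Fin 2 → Fin 4) (x y : W) :
    lamPhi2 b c ![x, y]
      = b.coord (c 0) x * b.coord (c 1) y - b.coord (c 1) x * b.coord (c 0) y := by
  show Matrix.det (Matrix.of fun i j => b.coord (c j) (![x, y] i)) = _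
  rw [Matrix.det_fin_two]
  simp

private theorem lamPhi3_apply (b : Module.Basis (Fin 4) ℝ W) (c : Fin 3 → Fin 4) (x y z : W) :
    lamPhi3 b c ![x, y, z] =
      b.coord (c 0) x * (b.coord (c 1) y * b.coord (c 2) z - b.coord (c 2) y * b.coord (c 1) z)
      - b.coord (c 1) x * (b.coord (c 0) y * b.coord (c 2) z - b.coord (c 2) y * b.coord (c 0) z)
      + b.coord (c 2) x * (b.coord (c 0) y * b.coord (c 1) z - b.coord (c 1) y * b.coord (c 0) z) := by
  show Matrix.det (Matrix.of fun i j => b.coord (c j) (![x, y, z] i)) = _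
  rw [Matrix.det_fin_three]
  simp; ring

end LambdaAux

set_option maxHeartbeats 1000000 in
set_option synthInstance.maxHeartbeats 1000000 in
/-- Let `f₀, f₁, f₂, f₃` be linearly independent covectors on a 4-dimensional real vector
space, `α_i := f₀ ∧ f_i`, `ε₁, ε₂ ≠ 0`, and `v_i, w_i` covectors satisfying
`2λ α₃ = ε₁ v₁∧v₂ + ε₂ w₁∧w₂`, `2λ α₂ = ε₁ v₃∧v₁ + ε₂ w₃∧w₁`,
`2λ α₁ = ε₁ v₂∧v₃ + ε₂ w₂∧w₃`, together with `Σᵢ vᵢ∧αᵢ = 0 = Σᵢ wᵢ∧αᵢ`.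
Then `λ = 0`. -/
theorem lambda_zero_of_system
    {V : Type*} [AddCommGroup V] [Module ℝ V] [FiniteDimensional ℝ V]
    (hdim : Module.finrank ℝ V = 4)
    (f : Fin 4 → Module.Dual ℝ V) (hf : LinearIndependent ℝ f)
    (ε₁ ε₂ lam : ℝ) (hε₁ : ε₁ ≠ 0) (hε₂ : ε₂ ≠ 0)
    (v w : Fin 3 → Module.Dual ℝ V)
    (h3 : (2 * lam) • (ι ℝ (f 0) * ι ℝ (f 3))
        = ε₁ • (ι ℝ (v 0) * ι ℝ (v 1)) + ε₂ • (ι ℝ (w 0) * ι ℝ (w 1)))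
    (h2 : (2 * lam) • (ι ℝ (f 0) * ι ℝ (f 2))
        = ε₁ • (ι ℝ (v 2) * ι ℝ (v 0)) + ε₂ • (ι ℝ (w 2) * ι ℝ (w 0)))
    (h1 : (2 * lam) • (ι ℝ (f 0) * ι ℝ (f 1))
        = ε₁ • (ι ℝ (v 1) * ι ℝ (v 2)) + ε₂ • (ι ℝ (w 1) * ι ℝ (w 2)))
    (hv : ι ℝ (v 0) * (ι ℝ (f 0) * ι ℝ (f 1))
        + ι ℝ (v 1) * (ι ℝ (f 0) * ι ℝ (f 2))
        + ι ℝ (v 2) * (ι ℝ (f 0) * ι ℝ (f 3)) = 0)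
    (hw : ι ℝ (w 0) * (ι ℝ (f 0) * ι ℝ (f 1))
        + ι ℝ (w 1) * (ι ℝ (f 0) * ι ℝ (f 2))
        + ι ℝ (w 2) * (ι ℝ (f 0) * ι ℝ (f 3)) = 0) :
    lam = 0 := by
  classical
  have hcard : Fintype.card (Fin 4) = Module.finrank ℝ (Module.Dual ℝ V) := by
    rw [Subspace.dual_finrank_eq, hdim, Fintype.card_fin]
  let b : Module.Basis (Fin 4) ℝ (Module.Dual ℝ V) :=
    basisOfLinearIndependentOfCardEqFinrank hf hcard
  have hb : ⇑b = f := coe_basisOfLinearIndependentOfCardEqFinrank hf hcard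
  have hcoord : ∀ j k : Fin 4, b.coord j (f k) = if k = j then 1 else 0 := by
    intro j k
    rw [← congrFun hb k]
    simp [Module.Basis.coord_apply, Module.Basis.repr_self, Finsupp.single_apply]
  -- the three coefficient equations
  have t1 := congrArg (liftAlternating (lamFam 2 (lamPhi2 b ![0, 1]))) h1
  have t2 := congrArg (liftAlternating (lamFam 2 (lamPhi2 b ![0, 2]))) h2
  have t3 := congrArg (liftAlternating (lamFam 2 (lamPhi2 b ![0, 3]))) h3
  simp only [map_add, map_smul, lamLift2, lamPhi2_apply, Matrix.cons_val_zero,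
    Matrix.cons_val_one, Matrix.head_cons, hcoord, smul_eq_mul] at t1 t2 t3
  simp (config := { decide := true }) [Fin.ext_iff] at t1 t2 t3
  -- symmetry relations from hv, hw
  have u1 := congrArg (liftAlternating (lamFam 3 (lamPhi3 b ![0, 1, 2]))) hv
  have u2 := congrArg (liftAlternating (lamFam 3 (lamPhi3 b ![0, 1, 3]))) hv
  have u3 := congrArg (liftAlternating (lamFam 3 (lamPhi3 b ![0, 2, 3]))) hv
  have u4 := congrArg (liftAlternating (lamFam 3 (lamPhi3 b ![0, 1, 2]))) hw
  have u5 := congrArg (liftAlternating (lamFam 3 (lamPhi3 b ![0, 1, 3]))) hw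
  have u6 := congrArg (liftAlternating (lamFam 3 (lamPhi3 b ![0, 2, 3]))) hw
  simp only [map_add, map_zero, lamLift3, lamPhi3_apply, Matrix.cons_val_zero,
    Matrix.cons_val_one, Matrix.head_cons, Matrix.cons_val_two, Matrix.tail_cons,
    hcoord] at u1 u2 u3 u4 u5 u6
  simp (config := { decide := true }) [Fin.ext_iff] at u1 u2 u3 u4 u5 u6
  linear_combination (t1 + t2 + t3) / 6
    + (ε₁ * b.repr (v 2) 0 / 6) * u1 - (ε₁ * b.repr (v 1) 0 / 6) * u2
    + (ε₁ * b.repr (v 0) 0 / 6) * u3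
    + (ε₂ * b.repr (w 2) 0 / 6) * u4 - (ε₂ * b.repr (w 1) 0 / 6) * u5
    + (ε₂ * b.repr (w 0) 0 / 6) * u6
end

section
/- Let t_1, t_2, t_3, s_1, s_2, s_3 be real numbers with (t_i, s_i) ≠ (0, 0) for each i, and ε_1, ε_2 nonzero reals satisfying ε_1 t_i t_j + ε_2 s_i s_j = 0 for all i ≠ j in {1,2,3}. Then s_i t_i ≠ 0 for every i, and there exists a real number c with s_i = c·t_i for all i ∈ {1,2,3}. -/
/-!
Read `ε₁ t t' + ε₂ s s'` as a nondegenerate symmetric bilinear form on the plane. The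
orthogonal complement of a nonzero vector is then a line, so two vectors orthogonal to a
common nonzero vector are parallel. Hence in a pairwise orthogonal triple any two vectors are
parallel and orthogonal, which forces them to be isotropic; an isotropic nonzero vector has
both coordinates nonzero, and a vector orthogonal to a nonzero isotropic one is parallel to it.
-/

section DiagonalForm

variable {R : Type*} [CommRing R] [NoZeroDivisors R] {ε₁ ε₂ t₀ s₀ t₁ s₁ t₂ s₂ : R}

theorem mul_eq_mul_of_orthogonal (hε₁ : ε₁ ≠ 0) (hε₂ : ε₂ ≠ 0) (hv : ¬ (t₀ = 0 ∧ s₀ = 0))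
    (h₁ : ε₁ * (t₀ * t₁) + ε₂ * (s₀ * s₁) = 0) (h₂ : ε₁ * (t₀ * t₂) + ε₂ * (s₀ * s₂) = 0) :
    t₁ * s₂ = s₁ * t₂ := by
  refine sub_eq_zero.mp (by_contra fun hdet => hv ⟨?_, ?_⟩)
  · have : ε₁ * t₀ * (t₁ * s₂ - s₁ * t₂) = 0 := by linear_combination s₂ * h₁ - s₁ * h₂
    simpa [hε₁, hdet] using this
  · have : ε₂ * s₀ * (t₁ * s₂ - s₁ * t₂) = 0 := by linear_combination t₁ * h₂ - t₂ * h₁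
    simpa [hε₂, hdet] using this

theorem self_orthogonal_of_parallel_of_orthogonal (hv : ¬ (t₁ = 0 ∧ s₁ = 0))
    (hpar : t₁ * s₂ = s₁ * t₂) (h : ε₁ * (t₁ * t₂) + ε₂ * (s₁ * s₂) = 0) :
    ε₁ * (t₂ * t₂) + ε₂ * (s₂ * s₂) = 0 := by
  by_contra hQ
  refine hv ⟨?_, ?_⟩
  · have : t₁ * (ε₁ * (t₂ * t₂) + ε₂ * (s₂ * s₂)) = 0 := by
      linear_combination t₂ * h + ε₂ * s₂ * hpar
    simpa [hQ] using this
  · have : s₁ * (ε₁ * (t₂ * t₂) + ε₂ * (s₂ * s₂)) = 0 := by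
      linear_combination s₂ * h - ε₁ * t₂ * hpar
    simpa [hQ] using this

theorem ne_zero_and_ne_zero_of_self_orthogonal (hε₁ : ε₁ ≠ 0) (hε₂ : ε₂ ≠ 0)
    (hv : ¬ (t₀ = 0 ∧ s₀ = 0)) (hQ : ε₁ * (t₀ * t₀) + ε₂ * (s₀ * s₀) = 0) :
    t₀ ≠ 0 ∧ s₀ ≠ 0 := by
  constructor <;> intro h0 <;> subst h0 <;> simp_all

end DiagonalForm

/-- If `(t_i, s_i) ≠ (0,0)` for `i = 1,2,3`, `ε₁, ε₂ ≠ 0`, and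
`ε₁ t_i t_j + ε₂ s_i s_j = 0` for all `i ≠ j`, then `s_i t_i ≠ 0` for every `i` and
there is a real `c` with `s_i = c t_i` for all `i`. -/
theorem proportional_of_relations (ε₁ ε₂ : ℝ) (hε₁ : ε₁ ≠ 0) (hε₂ : ε₂ ≠ 0)
    (t s : Fin 3 → ℝ) (hne : ∀ i, ¬ (t i = 0 ∧ s i = 0))
    (h : ∀ i j, i ≠ j → ε₁ * (t i * t j) + ε₂ * (s i * s j) = 0) :
    (∀ i, s i * t i ≠ 0) ∧ ∃ c : ℝ, ∀ i, s i = c * t i := by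
  have hQ : ∀ k, ε₁ * (t k * t k) + ε₂ * (s k * s k) = 0 := fun k =>
    self_orthogonal_of_parallel_of_orthogonal (hne (k + 1))
      (mul_eq_mul_of_orthogonal hε₁ hε₂ (hne (k + 2))
        (h _ _ (by revert k; decide)) (h _ _ (by revert k; decide)))
      (h _ _ (by revert k; decide))
  have hnz k := ne_zero_and_ne_zero_of_self_orthogonal hε₁ hε₂ (hne k) (hQ k)
  have h₀ : ∀ j, ε₁ * (t 0 * t j) + ε₂ * (s 0 * s j) = 0 := by
    intro j
    rcases eq_or_ne 0 j with rfl | hj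
    exacts [hQ 0, h 0 j hj]
  refine ⟨fun i => mul_ne_zero (hnz i).2 (hnz i).1, s 0 / t 0, fun i => ?_⟩
  have hpar := mul_eq_mul_of_orthogonal hε₁ hε₂ (hne 0) (hQ 0) (h₀ i)
  field_simp [(hnz 0).1]
  linear_combination hpar
end
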